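/- arXiv:1909.01294 — 9 statements merged into one kernel-verified Lean document; each statement's English description precedes it below -/
import Mathlib

section
/- The feasible set 𝒰 of the generalized Ramsey model with default is a bounded subset of ℝ^{2H(T+1)}; i.e., there exists a constant M such that every feasible point satisfies |a_t^h| ≤ M for all t = 1,…,T+1 and 0 < c_t^h ≤ M for all t = 0,…,T and all h = 1,…,H. -/
/-- Feasibility for the generalized Ramsey model with default. -/
def Feasible (H T : ℕ) (r ω : ℕ → ℝ) (l : Fin H → ℝ) (τ δ : ℝ)
    (a0 : Fin H → ℝ) (c a : Fin H → ℕ → ℝ) : Prop :=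
  (∀ h, a h 0 = a0 h) ∧
  (∀ h : Fin H, ∀ t ≤ T, 0 < c h t) ∧
  (∀ h : Fin H, ∀ t ≤ T,
    a h (t + 1) = τ * ω t * l h + (τ * (1 + r t) - δ) * a h t - τ * c h t) ∧
  (∀ t ≤ T, 0 ≤ ∑ h, a h (t + 1))

/-- Recursive bound on the aggregate capital. -/
noncomputable def Bseq (r ω : ℕ → ℝ) (τ δ L S0 : ℝ) : ℕ → ℝ
  | 0 => S0
  | t + 1 => τ * ω t * L + (τ * (1 + r t) - δ) * Bseq r ω τ δ L S0 t

/-- Recursive bound on individual capital. -/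
noncomputable def Aseq (r ω : ℕ → ℝ) (τ δ L S0 A0 : ℝ) : ℕ → ℝ
  | 0 => A0
  | t + 1 => τ * ω t * L + (τ * (1 + r t) - δ) * Aseq r ω τ δ L S0 A0 t
      + τ * Bseq r ω τ δ L S0 (t + 1)

/-- the feasible set is bounded: there is a constant `M` such that
every feasible point satisfies `|a_t^h| ≤ M` for `t = 1,…,T+1` and
`0 < c_t^h ≤ M` for `t = 0,…,T`, for all households `h`. -/
theorem feasible_set_bounded (H T : ℕ) (hH : 1 ≤ H)
    (r ω : ℕ → ℝ) (l β : Fin H → ℝ) (τ δ : ℝ) (a0 : Fin H → ℝ)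
    (hr : ∀ t ≤ T, 0 < r t) (hω : ∀ t ≤ T, 1 ≤ ω t)
    (hl : ∀ h, 0 < l h) (hβ : ∀ h, 0 < β h ∧ β h < 1)
    (hτ : 1 ≤ τ) (hδ0 : 0 < δ) (hδ1 : δ < 1)
    (ha0 : 0 < ∑ h, a0 h) :
    ∃ M : ℝ, ∀ c a : Fin H → ℕ → ℝ, Feasible H T r ω l τ δ a0 c a →
      (∀ h : Fin H, ∀ t, 1 ≤ t → t ≤ T + 1 → |a h t| ≤ M) ∧
      (∀ h : Fin H, ∀ t ≤ T, 0 < c h t ∧ c h t ≤ M) := by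
  set L : ℝ := ∑ h, l h with hLdef
  have hh0 : (⟨0, hH⟩ : Fin H) ∈ Finset.univ := Finset.mem_univ _
  have hL : 0 < L := Finset.sum_pos (fun h _ => hl h) ⟨_, hh0⟩
  set B : ℕ → ℝ := Bseq r ω τ δ L (∑ h, a0 h) with hBdef
  set A : ℕ → ℝ := Aseq r ω τ δ L (∑ h, a0 h) (∑ h, |a0 h|) with hAdef
  have hγ : ∀ t ≤ T, 0 < τ * (1 + r t) - δ := by
    intro t ht
    have := hr t ht
    nlinarith
  set M : ℝ := ∑ t ∈ Finset.range (T + 2), (|A t| + |B t|) with hMdef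
  have hmem : ∀ t, t ≤ T + 1 → t ∈ Finset.range (T + 2) := by
    intro t ht; exact Finset.mem_range.2 (by omega)
  have hAM : ∀ t ≤ T + 1, A t ≤ M := by
    intro t ht
    calc A t ≤ |A t| + |B t| := by
          have := abs_nonneg (B t); have := le_abs_self (A t); linarith
      _ ≤ M := Finset.single_le_sum (f := fun t => |A t| + |B t|)
          (fun i _ => by positivity) (hmem t ht)
  have hBM : ∀ t ≤ T + 1, B t ≤ M := by
    intro t ht
    calc B t ≤ |A t| + |B t| := by
          have := abs_nonneg (A t); have := le_abs_self (B t); linarith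
      _ ≤ M := Finset.single_le_sum (f := fun t => |A t| + |B t|)
          (fun i _ => by positivity) (hmem t ht)
  refine ⟨M, fun c a hf => ?_⟩
  obtain ⟨h0, hc, hrec, hSnn⟩ := hf
  -- aggregate consumption positive
  have hCpos : ∀ t ≤ T, 0 < ∑ h, c h t := by
    intro t ht
    exact Finset.sum_pos (fun h _ => hc h t ht) ⟨_, hh0⟩
  -- aggregate recursion
  have hsum : ∀ t ≤ T, ∑ h, a h (t + 1)
      = τ * ω t * L + (τ * (1 + r t) - δ) * (∑ h, a h t) - τ * (∑ h, c h t) := by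
    intro t ht
    calc ∑ h, a h (t + 1)
        = ∑ h, (τ * ω t * l h + (τ * (1 + r t) - δ) * a h t - τ * c h t) :=
          Finset.sum_congr rfl (fun h _ => hrec h t ht)
      _ = τ * ω t * L + (τ * (1 + r t) - δ) * (∑ h, a h t) - τ * (∑ h, c h t) := by
          rw [Finset.sum_sub_distrib, Finset.sum_add_distrib, ← Finset.mul_sum,
            ← Finset.mul_sum, ← Finset.mul_sum]
  -- aggregate bound
  have hSB : ∀ t, t ≤ T + 1 → (∑ h, a h t ≤ B t ∧ 0 ≤ B t) := by
    intro t
    induction t with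
    | zero =>
      intro _
      constructor
      · have : ∑ h, a h 0 = ∑ h, a0 h := Finset.sum_congr rfl (fun h _ => h0 h)
        rw [this]
        exact le_of_eq rfl
      · exact ha0.le
    | succ t ih =>
      intro ht
      have ht' : t ≤ T := by omega
      obtain ⟨ih1, ih2⟩ := ih (by omega)
      have hγt := hγ t ht'
      have hωt := hω t ht'
      have hC := hCpos t ht'
      have hs := hsum t ht'
      have hB1 : (B (t + 1) : ℝ) = τ * ω t * L + (τ * (1 + r t) - δ) * B t := rfl
      have hτ0 : (0:ℝ) < τ := by linarith
      have hω0 : (0:ℝ) ≤ ω t := by linarith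
      have e1 : 0 ≤ τ * ω t * L := mul_nonneg (mul_nonneg hτ0.le hω0) hL.le
      have e2 : (τ * (1 + r t) - δ) * (∑ h, a h t) ≤ (τ * (1 + r t) - δ) * B t :=
        mul_le_mul_of_nonneg_left ih1 hγt.le
      have e3 : 0 ≤ (τ * (1 + r t) - δ) * B t := mul_nonneg hγt.le ih2
      have e4 : 0 < τ * (∑ h, c h t) := mul_pos hτ0 hC
      constructor
      · rw [hs, hB1]; linarith
      · rw [hB1]; linarith
  -- aggregate consumption bound
  have hCB : ∀ t ≤ T, ∑ h, c h t ≤ B (t + 1) := by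
    intro t ht
    have hs := hsum t ht
    have hB1 : (B (t + 1) : ℝ) = τ * ω t * L + (τ * (1 + r t) - δ) * B t := rfl
    obtain ⟨hS1, hB0⟩ := hSB t (by omega)
    have hγt := hγ t ht
    have hSn := hSnn t ht
    have hC := hCpos t ht
    rw [hB1]
    have hτ0 : (0:ℝ) < τ := by linarith
    have e2 : (τ * (1 + r t) - δ) * (∑ h, a h t) ≤ (τ * (1 + r t) - δ) * B t :=
      mul_le_mul_of_nonneg_left hS1 hγt.le
    nlinarith
  -- individual capital bound
  have hA : ∀ t, t ≤ T + 1 → ∀ h, |a h t| ≤ A t := by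
    intro t
    induction t with
    | zero =>
      intro _ h
      rw [h0 h]
      have : (A 0 : ℝ) = ∑ h, |a0 h| := rfl
      rw [this]
      exact Finset.single_le_sum (f := fun h => |a0 h|) (fun i _ => abs_nonneg _)
        (Finset.mem_univ h)
    | succ t ih =>
      intro ht h
      have ht' : t ≤ T := by omega
      have ihh := ih (by omega) h
      have hγt := hγ t ht'
      have hωt := hω t ht'
      have hτ0 : (0:ℝ) < τ := by linarith
      have hch := hc h t ht'
      have hchB : c h t ≤ B (t + 1) := by
        have h1 : c h t ≤ ∑ h, c h t :=
          Finset.single_le_sum (f := fun h => c h t) (fun i _ => (hc i t ht').le)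
            (Finset.mem_univ h)
        exact h1.trans (hCB t ht')
      have hlh : l h ≤ L :=
        Finset.single_le_sum (f := fun h => l h) (fun i _ => (hl i).le)
          (Finset.mem_univ h)
      have hA1 : (A (t + 1) : ℝ)
          = τ * ω t * L + (τ * (1 + r t) - δ) * A t + τ * B (t + 1) := rfl
      rw [hrec h t ht', hA1, abs_le]
      have habs1 := le_abs_self (a h t)
      have habs2 := neg_abs_le (a h t)
      have hlh0 := (hl h).le
      have hτω : (0:ℝ) ≤ τ * ω t := mul_nonneg hτ0.le (by linarith)
      have e1 : τ * ω t * l h ≤ τ * ω t * L := mul_le_mul_of_nonneg_left hlh hτω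
      have e0 : 0 ≤ τ * ω t * l h := mul_nonneg hτω hlh0
      have hup : a h t ≤ A t := habs1.trans ihh
      have hdn : -A t ≤ a h t := by linarith
      have e2 : (τ * (1 + r t) - δ) * a h t ≤ (τ * (1 + r t) - δ) * A t :=
        mul_le_mul_of_nonneg_left hup hγt.le
      have e2' : (τ * (1 + r t) - δ) * (-A t) ≤ (τ * (1 + r t) - δ) * a h t :=
        mul_le_mul_of_nonneg_left hdn hγt.le
      have e3 : τ * c h t ≤ τ * B (t + 1) := mul_le_mul_of_nonneg_left hchB hτ0.le
      have e4 : 0 < τ * c h t := mul_pos hτ0 hch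
      constructor
      · nlinarith
      · linarith
  refine ⟨fun h t ht1 ht2 => (hA t ht2 h).trans (hAM t ht2), fun h t ht => ⟨hc h t ht, ?_⟩⟩
  have h1 : c h t ≤ B (t + 1) := by
    have := Finset.single_le_sum (f := fun h => c h t) (fun i _ => (hc i t ht).le)
      (Finset.mem_univ h)
    exact this.trans (hCB t ht)
  exact h1.trans (hBM (t + 1) (by omega))
end

section
/- There exists a Pareto optimal solution of the generalized Ramsey model with default, i.e. there exists a feasible point z̄ ∈ 𝒰 such that no feasible z ∈ 𝒰 satisfies φ_h(z) ≤ φ_h(z̄) for all h = 1,…,H with strict inequality for at least one h. -/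
namespace RamseyAux

open Finset

/-- Aggregate wealth recursion given aggregate consumption path `C`. -/
noncomputable def Sagg (r ω : ℕ → ℝ) (τ δ L A0 : ℝ) (C : ℕ → ℝ) : ℕ → ℝ
  | 0 => A0
  | t + 1 => τ * ω t * L + (τ * (1 + r t) - δ) * Sagg r ω τ δ L A0 C t - τ * C t

lemma Sagg_congr (r ω : ℕ → ℝ) (τ δ L A0 : ℝ) (C1 C2 : ℕ → ℝ) :
    ∀ n : ℕ, (∀ s < n, C1 s = C2 s) →
      Sagg r ω τ δ L A0 C1 n = Sagg r ω τ δ L A0 C2 n := by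
  intro n
  induction n with
  | zero => intro _; rfl
  | succ t ih =>
      intro hC
      simp only [Sagg, ih (fun s hs => hC s (hs.trans (Nat.lt_succ_self t))),
        hC t (Nat.lt_succ_self t)]

/-- Per-household wealth path. -/
noncomputable def aPath (r ω : ℕ → ℝ) (τ δ l0 A0 : ℝ) (c : ℕ → ℝ) : ℕ → ℝ
  | 0 => A0
  | t + 1 => τ * ω t * l0 + (τ * (1 + r t) - δ) * aPath r ω τ δ l0 A0 c t - τ * c t

lemma sum_eq_Sagg {H : ℕ} (r ω : ℕ → ℝ) (τ δ : ℝ) (l a0 : Fin H → ℝ)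
    (c : Fin H → ℕ → ℝ) (a : Fin H → ℕ → ℝ)
    (h0 : ∀ h, a h 0 = a0 h) (T : ℕ)
    (hrec : ∀ h : Fin H, ∀ t ≤ T,
      a h (t + 1) = τ * ω t * l h + (τ * (1 + r t) - δ) * a h t - τ * c h t) :
    ∀ t ≤ T + 1, ∑ h, a h t
      = Sagg r ω τ δ (∑ h, l h) (∑ h, a0 h) (fun s => ∑ h, c h s) t := by
  intro t
  induction t with
  | zero => intro _; simp [Sagg, h0]
  | succ t ih =>
      intro ht
      have ht' : t ≤ T := Nat.lt_succ_iff.mp ht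
      have := ih (le_trans (Nat.le_succ t) ht)
      simp only [Sagg, ← this]
      rw [Finset.sum_congr rfl (fun h _ => hrec h t ht')]
      rw [Finset.sum_sub_distrib, Finset.sum_add_distrib, ← Finset.mul_sum,
        ← Finset.mul_sum, ← Finset.mul_sum]

/-- The deficit recursion used in the transfer construction. -/
noncomputable def dRec (g : ℕ → ℝ) (τ half : ℝ) (Cc Δ : ℕ → ℝ) : ℕ → ℝ
  | 0 => 0
  | t + 1 =>
      if half ≤ Cc t then 0
      else g t * dRec g τ half Cc Δ t + τ * Δ t

/-- Concavity (two-sided slope) bounds from a negative second derivative. -/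
lemma concave_slope (u u' u'' : ℝ → ℝ)
    (h1 : ∀ x > (0:ℝ), HasDerivAt u (u' x) x)
    (h2 : ∀ x > (0:ℝ), HasDerivAt u' (u'' x) x)
    (hneg : ∀ x > (0:ℝ), u'' x < 0)
    {a b : ℝ} (ha : 0 < a) (hab : a < b) :
    u' b * (b - a) ≤ u b - u a ∧ u b - u a ≤ u' a * (b - a) := by
  have hanti : StrictAntiOn u' (Set.Ioi 0) := by
    apply strictAntiOn_of_deriv_neg (convex_Ioi 0)
    · intro x hx
      exact ((h2 x hx).differentiableAt.continuousAt).continuousWithinAt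
    · intro x hx
      rw [interior_Ioi] at hx
      rw [(h2 x hx).deriv]
      exact hneg x hx
  have hcont : ContinuousOn u (Set.Icc a b) := by
    intro x hx
    have hx0 : 0 < x := lt_of_lt_of_le ha hx.1
    exact ((h1 x hx0).differentiableAt.continuousAt).continuousWithinAt
  obtain ⟨ξ, hξ, hslope⟩ := exists_hasDerivAt_eq_slope u u' hab hcont
    (fun x hx => h1 x (lt_trans ha hx.1))
  have hba : (0:ℝ) < b - a := by linarith
  have hval : u b - u a = u' ξ * (b - a) := by
    field_simp at hslope
    linarith [hslope]
  have hξ0 : (0:ℝ) < ξ := lt_trans ha hξ.1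
  have h1' : u' b ≤ u' ξ := le_of_lt (hanti (Set.mem_Ioi.mpr hξ0)
    (Set.mem_Ioi.mpr (lt_trans ha hab)) hξ.2)
  have h2' : u' ξ ≤ u' a := le_of_lt (hanti (Set.mem_Ioi.mpr ha)
    (Set.mem_Ioi.mpr hξ0) hξ.1)
  constructor
  · rw [hval]; exact mul_le_mul_of_nonneg_right h1' (le_of_lt hba)
  · rw [hval]; exact mul_le_mul_of_nonneg_right h2' (le_of_lt hba)


set_option maxHeartbeats 1000000 in
lemma transfer {H T : ℕ} (hne : (Finset.univ : Finset (Fin H)).Nonempty)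
    (r ω : ℕ → ℝ) (β : Fin H → ℝ) (τ δ L A0 : ℝ)
    (u u' u'' : Fin H → ℝ → ℝ)
    (hu1 : ∀ h : Fin H, ∀ x > (0:ℝ), HasDerivAt (u h) (u' h x) x)
    (hu2 : ∀ h : Fin H, ∀ x > (0:ℝ), HasDerivAt (u' h) (u'' h x) x)
    (hu'pos : ∀ h : Fin H, ∀ x > (0:ℝ), 0 < u' h x)
    (hu''neg : ∀ h : Fin H, ∀ x > (0:ℝ), u'' h x < 0)
    (hτ0 : 0 < τ) (hL : 0 < L) (hA0 : 0 < A0)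
    (hω : ∀ t ≤ T, 1 ≤ ω t)
    (γ : ℕ → ℝ) (hγ : ∀ t, γ t = τ * (1 + r t) - δ)
    (hγpos : ∀ t ≤ T, 0 < γ t)
    (Γ1 : ℝ) (hΓ1 : 1 ≤ Γ1) (hγΓ : ∀ t ≤ T, γ t ≤ Γ1)
    (bmin : ℝ) (hb0 : 0 < bmin) (hbmin : ∀ h : Fin H, ∀ t ≤ T, bmin ≤ β h ^ t)
    (hβ1 : ∀ h : Fin H, ∀ t : ℕ, β h ^ t ≤ 1)
    (m : ℝ) (hm0 : 0 < m) (hHm : (H:ℝ) * m ≤ L / 8)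
    (U'm : ℝ) (hU'm0 : 0 ≤ U'm) (hU'm : ∀ h, u' h m ≤ U'm)
    (M0 : ℝ) (hM0 : U'm * (1 + (T+1) * Γ1 ^ (T+2)) ≤ bmin * M0)
    (ε : ℝ) (hε0 : 0 < ε) (hεm : ε ≤ m)
    (hεH : (H:ℝ) * ε ≤ L / 16)
    (hεK : Γ1 * (τ * H * (T+1) * Γ1 ^ (T+1)) * ε ≤ τ * L / 16)
    (hεI : ∀ h, M0 ≤ u' h ε)
    (cc : Fin H → ℕ → ℝ)
    (hpos : ∀ h : Fin H, ∀ t ≤ T, 0 < cc h t)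
    (hfeas : ∀ t ≤ T, 0 ≤ Sagg r ω τ δ L A0 (fun s => ∑ h, cc h s) (t+1)) :
    ∃ y : Fin H → ℕ → ℝ, (∀ h : Fin H, ∀ t ≤ T, ε ≤ y h t) ∧
      (∀ t ≤ T, 0 ≤ Sagg r ω τ δ L A0 (fun s => ∑ h, y h s) (t+1)) ∧
      (∑ h, ∑ t ∈ Finset.range (T+1), β h ^ t * u h (cc h t)) ≤
        (∑ h, ∑ t ∈ Finset.range (T+1), β h ^ t * u h (y h t)) := by
  classical
  have hΓ0 : (0:ℝ) < Γ1 := lt_of_lt_of_le one_pos hΓ1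
  set K0 : ℝ := τ * H * (T+1) * Γ1 ^ (T+1) with hK0def
  set Cc : ℕ → ℝ := fun t => ∑ h, cc h t with hCcdef
  set Δ : ℕ → ℝ := fun t => ∑ h, max (ε - cc h t) 0 with hΔdef
  set xh : Fin H → ℕ → ℝ := fun h t => max (cc h t) ε with hxhdef
  set d : ℕ → ℝ := dRec γ τ (L/2) Cc Δ with hddef
  set red : ℕ → ℝ := fun t => Δ t + γ t * d t / τ with hreddef
  set Sl : ℕ → ℝ := fun t => ∑ h, max (xh h t - m) 0 with hSldef
  set y : Fin H → ℕ → ℝ := fun h t =>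
    if t ≤ T then
      (if L/2 ≤ Cc t then xh h t - red t * max (xh h t - m) 0 / Sl t
       else xh h t)
    else 1 with hydef
  set R : ℝ := ∑ s ∈ Finset.range (T+1), Δ s with hRdef
  -- basic positivity facts
  have hΔ0 : ∀ t, 0 ≤ Δ t := by
    intro t
    exact Finset.sum_nonneg fun h _ => le_max_right _ _
  have hΔH : ∀ t ≤ T, Δ t ≤ (H:ℝ) * ε := by
    intro t ht
    have : ∀ h : Fin H, max (ε - cc h t) 0 ≤ ε := by
      intro h
      apply max_le _ (le_of_lt hε0)
      linarith [hpos h t ht]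
    calc Δ t ≤ ∑ _h : Fin H, ε := Finset.sum_le_sum fun h _ => this h
      _ = (H:ℝ) * ε := by simp [Finset.sum_const, Finset.card_univ, mul_comm]
  have hxh_sum : ∀ t, ∑ h, xh h t = Cc t + Δ t := by
    intro t
    have : ∀ h : Fin H, xh h t = cc h t + max (ε - cc h t) 0 := by
      intro h
      simp only [hxhdef]
      rcases le_total (cc h t) ε with hle | hle
      · rw [max_eq_right hle, max_eq_left (by linarith)]; ring
      · rw [max_eq_left hle, max_eq_right (by linarith)]; ring
    rw [Finset.sum_congr rfl fun h _ => this h, Finset.sum_add_distrib]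
  have hd0 : ∀ t, t ≤ T + 1 → 0 ≤ d t := by
    intro t
    induction t with
    | zero => intro _; simp [hddef, dRec]
    | succ t ih =>
        intro ht
        have ht' : t ≤ T := Nat.lt_succ_iff.mp ht
        have ih' := ih (le_trans (Nat.le_succ t) ht)
        show 0 ≤ dRec γ τ (L/2) Cc Δ (t+1)
        rw [dRec]
        split
        · exact le_rfl
        · have := hγpos t ht'
          have := hΔ0 t
          nlinarith
  have hdB : ∀ t, t ≤ T + 1 → d t ≤ τ * Γ1 ^ t * ∑ s ∈ Finset.range t, Δ s := by
    intro t
    induction t with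
    | zero => intro _; simp [hddef, dRec]
    | succ t ih =>
        intro ht
        have ht' : t ≤ T := Nat.lt_succ_iff.mp ht
        have ih' := ih (le_trans (Nat.le_succ t) ht)
        have hd0' := hd0 t (le_trans (Nat.le_succ t) ht)
        have hsum0 : 0 ≤ ∑ s ∈ Finset.range t, Δ s :=
          Finset.sum_nonneg fun s _ => hΔ0 s
        have hpow1 : (1:ℝ) ≤ Γ1 ^ (t+1) := by
          calc (1:ℝ) = 1 ^ (t+1) := by simp
            _ ≤ Γ1 ^ (t+1) := pow_le_pow_left₀ (by norm_num) hΓ1 _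
        have hpow0 : (0:ℝ) ≤ Γ1 ^ t := pow_nonneg hΓ0.le t
        show dRec γ τ (L/2) Cc Δ (t+1) ≤ _
        rw [dRec, Finset.sum_range_succ]
        split
        · have hq : 0 ≤ ∑ s ∈ Finset.range t, Δ s + Δ t := by linarith [hΔ0 t]
          exact mul_nonneg (mul_nonneg hτ0.le (by linarith)) hq
        · have hγt := hγΓ t ht'
          have hγt0 := (hγpos t ht').le
          have h1 : γ t * d t ≤ Γ1 * (τ * Γ1 ^ t * ∑ s ∈ Finset.range t, Δ s) := by
            nlinarith
          have h2 : τ * Δ t ≤ τ * Γ1 ^ (t+1) * Δ t := by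
            nlinarith [hΔ0 t, mul_nonneg (hΔ0 t) (sub_nonneg.mpr hpow1)]
          have : Γ1 * (τ * Γ1 ^ t * ∑ s ∈ Finset.range t, Δ s)
              = τ * Γ1 ^ (t+1) * ∑ s ∈ Finset.range t, Δ s := by ring
          rw [this] at h1
          calc γ t * dRec γ τ (L/2) Cc Δ t + τ * Δ t
              ≤ τ * Γ1 ^ (t+1) * ∑ s ∈ Finset.range t, Δ s + τ * Γ1 ^ (t+1) * Δ t := by
                exact add_le_add h1 h2
            _ = τ * Γ1 ^ (t+1) * (∑ s ∈ Finset.range t, Δ s + Δ t) := by ring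
  have hR0 : 0 ≤ R := Finset.sum_nonneg fun s _ => hΔ0 s
  have hRH : R ≤ (T+1) * ((H:ℝ) * ε) := by
    calc R ≤ ∑ _s ∈ Finset.range (T+1), (H:ℝ) * ε :=
          Finset.sum_le_sum fun s hs => hΔH s (Nat.lt_succ_iff.mp (Finset.mem_range.mp hs))
      _ = (T+1) * ((H:ℝ) * ε) := by
          simp [Finset.sum_const, Finset.card_range]
  have hdR : ∀ t, t ≤ T + 1 → d t ≤ τ * Γ1 ^ (T+1) * R := by
    intro t ht
    have h1 := hdB t ht
    have hsub : ∑ s ∈ Finset.range t, Δ s ≤ R := by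
      apply Finset.sum_le_sum_of_subset_of_nonneg
      · exact Finset.range_subset_range.mpr ht
      · intro s _ _; exact hΔ0 s
    have hpow : Γ1 ^ t ≤ Γ1 ^ (T+1) := pow_le_pow_right₀ (by linarith) ht
    have hsum0 : 0 ≤ ∑ s ∈ Finset.range t, Δ s :=
      Finset.sum_nonneg fun s _ => hΔ0 s
    have hpow0 : (0:ℝ) ≤ Γ1 ^ t := pow_nonneg hΓ0.le t
    have e1 : τ * Γ1 ^ t * (∑ s ∈ Finset.range t, Δ s) ≤ τ * Γ1 ^ t * R := by
      have h0 : 0 ≤ τ * Γ1 ^ t := mul_nonneg hτ0.le hpow0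
      nlinarith
    have e2 : τ * Γ1 ^ t * R ≤ τ * Γ1 ^ (T+1) * R := by
      nlinarith [mul_nonneg (mul_nonneg hτ0.le hR0) (sub_nonneg.mpr hpow)]
    linarith
  have hdK : ∀ t, t ≤ T + 1 → d t ≤ K0 * ε := by
    intro t ht
    have h1 := hdR t ht
    have hpow0 : (0:ℝ) ≤ Γ1 ^ (T+1) := pow_nonneg hΓ0.le _
    have : τ * Γ1 ^ (T+1) * R ≤ τ * Γ1 ^ (T+1) * ((T+1) * ((H:ℝ) * ε)) :=
      mul_le_mul_of_nonneg_left hRH (mul_nonneg hτ0.le hpow0)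
    rw [hK0def]
    calc d t ≤ τ * Γ1 ^ (T+1) * ((T+1) * ((H:ℝ) * ε)) := le_trans h1 this
      _ = τ * H * (T+1) * Γ1 ^ (T+1) * ε := by push_cast; ring
  have hγd : ∀ t ≤ T, γ t * d t ≤ τ * L / 16 := by
    intro t ht
    have h2 := hdK t (le_trans ht (Nat.le_succ T))
    have h3 := hγΓ t ht
    have h4 := hd0 t (le_trans ht (Nat.le_succ T))
    have h5 : γ t * d t ≤ Γ1 * (K0 * ε) := by nlinarith [hγpos t ht]
    calc γ t * d t ≤ Γ1 * (K0 * ε) := h5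
      _ = Γ1 * K0 * ε := by ring
      _ ≤ τ * L / 16 := by rw [hK0def]; exact hεK
  have hred0 : ∀ t ≤ T, 0 ≤ red t := by
    intro t ht
    have h1 := hΔ0 t
    have h2 := hd0 t (le_trans ht (Nat.le_succ T))
    have h3 := (hγpos t ht).le
    have : 0 ≤ γ t * d t / τ := by positivity
    simp only [hreddef]
    linarith
  have hredB : ∀ t ≤ T, red t ≤ L / 8 := by
    intro t ht
    have h1 := hΔH t ht
    have h2 := hdK t (le_trans ht (Nat.le_succ T))
    have h3 := hγΓ t ht
    have h4 := hd0 t (le_trans ht (Nat.le_succ T))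
    have h6 : γ t * d t / τ ≤ L / 16 := by
      rw [div_le_iff₀ hτ0]
      calc γ t * d t ≤ τ * L / 16 := hγd t ht
        _ = L / 16 * τ := by ring
    simp only [hreddef]
    linarith
  have hSl : ∀ t ≤ T, L/2 ≤ Cc t → 3 * L / 8 ≤ Sl t := by
    intro t ht hC
    have h1 : ∑ h, (xh h t - m) ≤ Sl t :=
      Finset.sum_le_sum fun h _ => le_max_left _ _
    have h2 : ∑ h, (xh h t - m) = Cc t + Δ t - (H:ℝ) * m := by
      rw [Finset.sum_sub_distrib, hxh_sum]
      simp [Finset.sum_const, Finset.card_univ, mul_comm]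
    have := hΔ0 t
    linarith
  have hyε : ∀ h : Fin H, ∀ t ≤ T, ε ≤ y h t := by
    intro h t ht
    simp only [hydef, if_pos ht]
    split
    · rename_i hC
      have hSlpos : 0 < Sl t := lt_of_lt_of_le (by linarith) (hSl t ht hC)
      rcases le_or_gt (xh h t) m with hxm | hxm
      · rw [max_eq_right (by linarith)]
        simp only [mul_zero, zero_div, sub_zero]
        exact le_max_right _ _
      · have hrs : red t ≤ Sl t :=
          le_trans (hredB t ht)
            (le_trans (by linarith : L/8 ≤ 3*L/8) (hSl t ht hC))
        have hq1 : red t / Sl t ≤ 1 := (div_le_one hSlpos).mpr hrs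
        have hq0 : 0 ≤ red t / Sl t := div_nonneg (hred0 t ht) hSlpos.le
        have heq : red t * max (xh h t - m) 0 / Sl t
            = (red t / Sl t) * (xh h t - m) := by
          rw [max_eq_left (by linarith)]; ring
        rw [heq]
        nlinarith [mul_le_of_le_one_left (by linarith : (0:ℝ) ≤ xh h t - m) hq1]
    · exact le_max_right _ _
  have hyxh : ∀ h : Fin H, ∀ t ≤ T, y h t ≤ xh h t := by
    intro h t ht
    simp only [hydef, if_pos ht]
    split
    · rename_i hC
      have hSlpos : 0 < Sl t := lt_of_lt_of_le (by linarith) (hSl t ht hC)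
      have : 0 ≤ red t * max (xh h t - m) 0 / Sl t :=
        div_nonneg (mul_nonneg (hred0 t ht) (le_max_right _ _)) hSlpos.le
      linarith
    · exact le_rfl
  have hysum : ∀ t ≤ T, ∑ h, y h t =
      (if L/2 ≤ Cc t then Cc t + Δ t - red t else Cc t + Δ t) := by
    intro t ht
    simp only [hydef, if_pos ht]
    rcases le_or_gt (L/2) (Cc t) with hC | hC
    · rw [if_pos hC]
      have hSlpos : 0 < Sl t := lt_of_lt_of_le (by linarith) (hSl t ht hC)
      rw [Finset.sum_congr rfl (fun h _ => if_pos hC), Finset.sum_sub_distrib,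
        hxh_sum]
      have e1 : ∑ h, red t * max (xh h t - m) 0 / Sl t
          = (red t / Sl t) * ∑ h, max (xh h t - m) 0 := by
        rw [Finset.mul_sum]
        exact Finset.sum_congr rfl fun h _ => by ring
      rw [e1]
      have : (red t / Sl t) * Sl t = red t := div_mul_cancel₀ _ (ne_of_gt hSlpos)
      rw [hSldef] at this ⊢
      rw [this]
    · rw [if_neg (not_le.mpr hC),
        Finset.sum_congr rfl (fun h _ => if_neg (not_le.mpr hC)), hxh_sum]
  have hτne : τ ≠ 0 := ne_of_gt hτ0
  have hSy : ∀ t, t ≤ T + 1 →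
      Sagg r ω τ δ L A0 (fun s => ∑ h, y h s) t
        = Sagg r ω τ δ L A0 Cc t - d t := by
    intro t
    induction t with
    | zero => intro _; simp [Sagg, hddef, dRec]
    | succ t ih =>
        intro ht
        have ht' : t ≤ T := Nat.lt_succ_iff.mp ht
        have ih' := ih (le_trans (Nat.le_succ t) ht)
        simp only [Sagg]
        rw [ih', hysum t ht']
        simp only [hddef, dRec]
        rcases le_or_gt (L/2) (Cc t) with hC | hC
        · rw [if_pos hC, if_pos hC]
          simp only [hreddef, ← hddef]
          rw [← hγ t]
          field_simp
          ring
        · rw [if_neg (not_le.mpr hC), if_neg (not_le.mpr hC)]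
          simp only [← hddef]
          rw [← hγ t]
          ring
  have hScc0 : ∀ t ≤ T, 0 ≤ Sagg r ω τ δ L A0 Cc t := by
    intro t ht
    match t with
    | 0 => simpa [Sagg] using hA0.le
    | Nat.succ n => exact hfeas n (by omega)
  have hfeasy : ∀ t ≤ T, 0 ≤ Sagg r ω τ δ L A0 (fun s => ∑ h, y h s) (t+1) := by
    intro t ht
    rw [hSy (t+1) (by omega)]
    rcases le_or_gt (L/2) (Cc t) with hC | hC
    · have hd1 : d (t+1) = 0 := by
        simp only [hddef, dRec, if_pos hC]
      rw [hd1]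
      linarith [hfeas t ht]
    · have hd1 : d (t+1) = γ t * d t + τ * Δ t := by
        simp only [hddef, dRec, if_neg (not_le.mpr hC)]
      rw [hd1]
      simp only [Sagg]
      rw [← hγ t]
      have h1 : 0 ≤ γ t * Sagg r ω τ δ L A0 Cc t :=
        mul_nonneg (hγpos t ht).le (hScc0 t ht)
      have h2 : τ * L ≤ τ * ω t * L := by
        nlinarith [hω t ht, mul_pos hτ0 hL]
      have h3 : τ * Cc t ≤ τ * (L/2) :=
        mul_le_mul_of_nonneg_left hC.le hτ0.le
      have h4 : τ * Δ t ≤ τ * ((H:ℝ) * ε) :=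
        mul_le_mul_of_nonneg_left (hΔH t ht) hτ0.le
      have h5 : τ * ((H:ℝ) * ε) ≤ τ * (L/16) :=
        mul_le_mul_of_nonneg_left hεH hτ0.le
      have h6 := hγd t ht
      have h7 := mul_pos hτ0 hL
      linarith
  have hanti : ∀ h : Fin H, ∀ x z : ℝ, 0 < x → x ≤ z → u' h z ≤ u' h x := by
    intro h x z hx hxz
    rcases eq_or_lt_of_le hxz with rfl | hlt
    · exact le_rfl
    · have hsa : StrictAntiOn (u' h) (Set.Ioi 0) := by
        apply strictAntiOn_of_deriv_neg (convex_Ioi 0)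
        · intro w hw
          exact ((hu2 h w hw).differentiableAt.continuousAt).continuousWithinAt
        · intro w hw
          rw [interior_Ioi] at hw
          rw [(hu2 h w hw).deriv]
          exact hu''neg h w hw
      exact (hsa (Set.mem_Ioi.mpr hx)
        (Set.mem_Ioi.mpr (lt_of_lt_of_le hx hxz)) hlt).le
  have hym : ∀ h : Fin H, ∀ t ≤ T, y h t < xh h t → m ≤ y h t := by
    intro h t ht hlt
    simp only [hydef, if_pos ht] at hlt ⊢
    by_cases hC : L/2 ≤ Cc t
    · rw [if_pos hC] at hlt ⊢
      have hSlpos : 0 < Sl t := lt_of_lt_of_le (by linarith) (hSl t ht hC)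
      rcases le_or_gt (xh h t) m with hxm | hxm
      · rw [max_eq_right (by linarith)] at hlt
        simp only [mul_zero, zero_div, sub_zero] at hlt
        exact absurd hlt (lt_irrefl _)
      · have hrs : red t ≤ Sl t :=
          le_trans (hredB t ht)
            (le_trans (by linarith : L/8 ≤ 3*L/8) (hSl t ht hC))
        have hq1 : red t / Sl t ≤ 1 := (div_le_one hSlpos).mpr hrs
        have hq0 : 0 ≤ red t / Sl t := div_nonneg (hred0 t ht) hSlpos.le
        have heq : red t * max (xh h t - m) 0 / Sl t
            = (red t / Sl t) * (xh h t - m) := by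
          rw [max_eq_left (by linarith)]; ring
        rw [heq]
        nlinarith [mul_le_of_le_one_left (by linarith : (0:ℝ) ≤ xh h t - m) hq1]
    · rw [if_neg hC] at hlt
      exact absurd hlt (lt_irrefl _)
  have hyeqs : ∀ h : Fin H, ∀ t ≤ T, cc h t < ε → y h t = ε := by
    intro h t ht hsm
    have hxe : xh h t = ε := max_eq_right hsm.le
    simp only [hydef, if_pos ht]
    by_cases hC : L/2 ≤ Cc t
    · rw [if_pos hC, hxe, max_eq_right (by linarith : ε - m ≤ 0)]
      simp
    · rw [if_neg hC]
      exact hxe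
  have hperh : ∀ t, t ≤ T → ∀ h : Fin H,
      bmin * M0 * max (ε - cc h t) 0 - U'm * (xh h t - y h t)
        ≤ β h ^ t * u h (y h t) - β h ^ t * u h (cc h t) := by
    intro t ht h
    have hc : 0 < cc h t := hpos h t ht
    rcases lt_or_ge (cc h t) ε with hsm | hbig
    · have hy : y h t = ε := hyeqs h t ht hsm
      have hxe : xh h t = ε := max_eq_right hsm.le
      rw [hy, hxe, max_eq_left (by linarith), sub_self, mul_zero, sub_zero]
      have hcs := concave_slope (u h) (u' h) (u'' h) (hu1 h) (hu2 h)
        (hu''neg h) hc hsm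
      have h1 : M0 * (ε - cc h t) ≤ u' h ε * (ε - cc h t) :=
        mul_le_mul_of_nonneg_right (hεI h) (by linarith)
      have h2 : 0 ≤ u h ε - u h (cc h t) := by
        nlinarith [hcs.1, hu'pos h ε hε0]
      have h3 : bmin * (u h ε - u h (cc h t))
          ≤ β h ^ t * (u h ε - u h (cc h t)) :=
        mul_le_mul_of_nonneg_right (hbmin h t ht) h2
      nlinarith [hcs.1]
    · have hxe : xh h t = cc h t := max_eq_left hbig
      rw [max_eq_right (by linarith), mul_zero, zero_sub]
      rcases eq_or_lt_of_le (hyxh h t ht) with heq | hlt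
      · rw [heq, hxe, sub_self, mul_zero, sub_self, neg_zero]
      · have hmy : m ≤ y h t := hym h t ht hlt
        have hy0 : 0 < y h t := lt_of_lt_of_le hm0 hmy
        rw [hxe] at hlt
        have hcs := concave_slope (u h) (u' h) (u'' h) (hu1 h) (hu2 h)
          (hu''neg h) hy0 hlt
        have hu'y : u' h (y h t) ≤ U'm :=
          le_trans (hanti h m (y h t) hm0 hmy) (hU'm h)
        have q0 : 0 ≤ u h (cc h t) - u h (y h t) := by
          nlinarith [hcs.1, hu'pos h (cc h t) hc]
        have q1 : u h (cc h t) - u h (y h t) ≤ U'm * (cc h t - y h t) :=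
          le_trans hcs.2 (mul_le_mul_of_nonneg_right hu'y (by linarith))
        have q2 : β h ^ t * (u h (cc h t) - u h (y h t))
            ≤ u h (cc h t) - u h (y h t) :=
          mul_le_of_le_one_left q0 (hβ1 h t)
        rw [hxe]
        nlinarith
  have hxysum : ∀ t ≤ T, ∑ h, (xh h t - y h t)
      = (if L/2 ≤ Cc t then red t else 0) := by
    intro t ht
    rw [Finset.sum_sub_distrib, hxh_sum, hysum t ht]
    rcases le_or_gt (L/2) (Cc t) with hC | hC
    · rw [if_pos hC, if_pos hC]; ring
    · rw [if_neg (not_le.mpr hC), if_neg (not_le.mpr hC)]; ring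
  have hblock : ∀ t ∈ Finset.range (T+1),
      bmin * M0 * Δ t - U'm * (if L/2 ≤ Cc t then red t else 0)
        ≤ ∑ h, (β h ^ t * u h (y h t) - β h ^ t * u h (cc h t)) := by
    intro t htm
    have ht : t ≤ T := Nat.lt_succ_iff.mp (Finset.mem_range.mp htm)
    have e1 : ∑ h, (bmin * M0 * max (ε - cc h t) 0 - U'm * (xh h t - y h t))
        = bmin * M0 * Δ t - U'm * (if L/2 ≤ Cc t then red t else 0) := by
      rw [Finset.sum_sub_distrib, ← Finset.mul_sum, ← Finset.mul_sum,
        hxysum t ht]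
    rw [← e1]
    exact Finset.sum_le_sum fun h _ => hperh t ht h
  have hitesum : ∑ t ∈ Finset.range (T+1), (if L/2 ≤ Cc t then red t else 0)
      ≤ (1 + (T+1) * Γ1 ^ (T+2)) * R := by
    have per : ∀ t ∈ Finset.range (T+1),
        (if L/2 ≤ Cc t then red t else 0) ≤ Δ t + (Γ1/τ) * d t := by
      intro t htm
      have ht : t ≤ T := Nat.lt_succ_iff.mp (Finset.mem_range.mp htm)
      have hd0' := hd0 t (le_trans ht (Nat.le_succ T))
      have hγt := hγΓ t ht
      have h1 : γ t * d t / τ ≤ (Γ1/τ) * d t := by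
        rw [div_le_iff₀ hτ0]
        have : γ t * d t ≤ Γ1 * d t := mul_le_mul_of_nonneg_right hγt hd0'
        calc γ t * d t ≤ Γ1 * d t := this
          _ = Γ1 / τ * d t * τ := by field_simp
      split
      · simp only [hreddef]; linarith
      · have : 0 ≤ (Γ1/τ) * d t :=
          mul_nonneg (div_nonneg hΓ0.le hτ0.le) hd0'
        linarith [hΔ0 t]
    have hsumd : ∑ t ∈ Finset.range (T+1), d t ≤ (T+1) * (τ * Γ1 ^ (T+1) * R) := by
      calc ∑ t ∈ Finset.range (T+1), d t
          ≤ ∑ _t ∈ Finset.range (T+1), (τ * Γ1 ^ (T+1) * R) :=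
            Finset.sum_le_sum fun t htm => hdR t
              (le_trans (Nat.lt_succ_iff.mp (Finset.mem_range.mp htm)) (Nat.le_succ T))
        _ = (T+1) * (τ * Γ1 ^ (T+1) * R) := by
            simp [Finset.sum_const, Finset.card_range]
    calc ∑ t ∈ Finset.range (T+1), (if L/2 ≤ Cc t then red t else 0)
        ≤ ∑ t ∈ Finset.range (T+1), (Δ t + (Γ1/τ) * d t) :=
          Finset.sum_le_sum per
      _ = R + (Γ1/τ) * ∑ t ∈ Finset.range (T+1), d t := by
          rw [Finset.sum_add_distrib, ← Finset.mul_sum]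
      _ ≤ R + (Γ1/τ) * ((T+1) * (τ * Γ1 ^ (T+1) * R)) := by
          have : 0 ≤ Γ1/τ := div_nonneg hΓ0.le hτ0.le
          nlinarith [hsumd]
      _ = (1 + (T+1) * Γ1 ^ (T+2)) * R := by
          field_simp
          ring
  have hW : (∑ h, ∑ t ∈ Finset.range (T+1), β h ^ t * u h (cc h t)) ≤
      (∑ h, ∑ t ∈ Finset.range (T+1), β h ^ t * u h (y h t)) := by
    have key : bmin * M0 * R - U'm * ∑ t ∈ Finset.range (T+1),
          (if L/2 ≤ Cc t then red t else 0)
        ≤ ∑ t ∈ Finset.range (T+1), ∑ h,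
            (β h ^ t * u h (y h t) - β h ^ t * u h (cc h t)) := by
      calc bmin * M0 * R - U'm * ∑ t ∈ Finset.range (T+1),
            (if L/2 ≤ Cc t then red t else 0)
          = ∑ t ∈ Finset.range (T+1),
              (bmin * M0 * Δ t - U'm * (if L/2 ≤ Cc t then red t else 0)) := by
            rw [Finset.sum_sub_distrib, ← Finset.mul_sum, ← Finset.mul_sum]
        _ ≤ _ := Finset.sum_le_sum hblock
    have h2 : U'm * ∑ t ∈ Finset.range (T+1), (if L/2 ≤ Cc t then red t else 0)
        ≤ bmin * M0 * R := by
      have s0 : 0 ≤ ∑ t ∈ Finset.range (T+1), (if L/2 ≤ Cc t then red t else 0) := by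
        apply Finset.sum_nonneg
        intro t htm
        split
        · exact hred0 t (Nat.lt_succ_iff.mp (Finset.mem_range.mp htm))
        · exact le_rfl
      calc U'm * ∑ t ∈ Finset.range (T+1), (if L/2 ≤ Cc t then red t else 0)
          ≤ U'm * ((1 + (T+1) * Γ1 ^ (T+2)) * R) :=
            mul_le_mul_of_nonneg_left hitesum hU'm0
        _ = U'm * (1 + (T+1) * Γ1 ^ (T+2)) * R := by ring
        _ ≤ bmin * M0 * R := mul_le_mul_of_nonneg_right hM0 hR0
    have hdiff : (∑ h, ∑ t ∈ Finset.range (T+1), β h ^ t * u h (y h t))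
        - (∑ h, ∑ t ∈ Finset.range (T+1), β h ^ t * u h (cc h t))
        = ∑ t ∈ Finset.range (T+1), ∑ h,
            (β h ^ t * u h (y h t) - β h ^ t * u h (cc h t)) := by
      rw [← Finset.sum_sub_distrib]
      rw [Finset.sum_congr rfl fun h _ => (Finset.sum_sub_distrib _ _).symm]
      exact Finset.sum_comm
    linarith
  exact ⟨y, hyε, hfeasy, hW⟩


end RamseyAux

/-- The vector-valued objective `φ_h(z) = −Σ_{t=0}^T (β^h)^t u^h(c_t^h)`. -/
def Phi {H : ℕ} (T : ℕ) (β : Fin H → ℝ) (u : Fin H → ℝ → ℝ)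
    (c : Fin H → ℕ → ℝ) (h : Fin H) : ℝ :=
  -∑ t ∈ Finset.range (T + 1), β h ^ t * u h (c h t)

/-- Pareto optimality for the model with default. -/
def Pareto (H T : ℕ) (r ω : ℕ → ℝ) (l β : Fin H → ℝ) (τ δ : ℝ)
    (a0 : Fin H → ℝ) (u : Fin H → ℝ → ℝ) (c a : Fin H → ℕ → ℝ) : Prop :=
  Feasible H T r ω l τ δ a0 c a ∧
  ¬ ∃ c' a' : Fin H → ℕ → ℝ, Feasible H T r ω l τ δ a0 c' a' ∧
      (∀ h : Fin H, Phi T β u c' h ≤ Phi T β u c h) ∧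
      (∃ h : Fin H, Phi T β u c' h < Phi T β u c h)


set_option maxHeartbeats 1000000 in
/-- there exists a Pareto optimal solution of the generalized
Ramsey model with default. -/
theorem exists_pareto_optimal (H T : ℕ) (hH : 1 ≤ H)
    (r ω : ℕ → ℝ) (l β : Fin H → ℝ) (τ δ : ℝ) (a0 : Fin H → ℝ)
    (hr : ∀ t ≤ T, 0 < r t) (hω : ∀ t ≤ T, 1 ≤ ω t)
    (hl : ∀ h, 0 < l h) (hβ : ∀ h, 0 < β h ∧ β h < 1)
    (hτ : 1 ≤ τ) (hδ0 : 0 < δ) (hδ1 : δ < 1)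
    (ha0 : 0 < ∑ h, a0 h)
    (u u' u'' : Fin H → ℝ → ℝ)
    (hu1 : ∀ h : Fin H, ∀ x > (0:ℝ), HasDerivAt (u h) (u' h x) x)
    (hu2 : ∀ h : Fin H, ∀ x > (0:ℝ), HasDerivAt (u' h) (u'' h x) x)
    (hu2c : ∀ h : Fin H, ContinuousOn (u'' h) (Set.Ioi 0))
    (hu'pos : ∀ h : Fin H, ∀ x > (0:ℝ), 0 < u' h x)
    (hu''neg : ∀ h : Fin H, ∀ x > (0:ℝ), u'' h x < 0)
    (hu'top : ∀ h : Fin H, Filter.Tendsto (u' h) Filter.atTop (nhds 0))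
    (hu'zero : ∀ h : Fin H,
      Filter.Tendsto (u' h) (nhdsWithin 0 (Set.Ioi 0)) Filter.atTop) :
    ∃ c a : Fin H → ℕ → ℝ, Pareto H T r ω l β τ δ a0 u c a := by
  classical
  open RamseyAux Finset in
  have hne : (Finset.univ : Finset (Fin H)).Nonempty :=
    ⟨⟨0, hH⟩, Finset.mem_univ _⟩
  set L := ∑ h, l h with hLdef
  have hL : 0 < L := Finset.sum_pos (fun h _ => hl h) hne
  have hτ0 : (0:ℝ) < τ := lt_of_lt_of_le one_pos hτ
  set A0 := ∑ h, a0 h with hA0def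
  have hA0 : 0 < A0 := ha0
  set γ : ℕ → ℝ := fun t => τ * (1 + r t) - δ with hγdef
  have hγ : ∀ t, γ t = τ * (1 + r t) - δ := fun t => rfl
  have hγpos : ∀ t ≤ T, 0 < γ t := by
    intro t ht
    have h1 := hr t ht
    simp only [hγdef]
    nlinarith
  set Γ1 : ℝ := max 1 ((Finset.range (T+1)).sup' ⟨0, by simp⟩ γ) with hΓ1def
  have hΓ1 : 1 ≤ Γ1 := le_max_left _ _
  have hΓ0 : (0:ℝ) < Γ1 := lt_of_lt_of_le one_pos hΓ1
  have hγΓ : ∀ t ≤ T, γ t ≤ Γ1 :=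
    fun t ht => le_trans
      (Finset.le_sup' γ (Finset.mem_range.mpr (by omega))) (le_max_right _ _)
  set bmin := Finset.univ.inf' hne (fun h => β h ^ T) with hbdef
  have hb0 : 0 < bmin := by
    rw [hbdef, Finset.lt_inf'_iff]
    exact fun h _ => pow_pos (hβ h).1 T
  have hbmin : ∀ h : Fin H, ∀ t ≤ T, bmin ≤ β h ^ t := by
    intro h t ht
    have h1 : bmin ≤ β h ^ T := Finset.inf'_le _ (Finset.mem_univ h)
    have h2 : β h ^ T ≤ β h ^ t :=
      pow_le_pow_of_le_one (hβ h).1.le (hβ h).2.le ht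
    linarith
  have hβ1 : ∀ h : Fin H, ∀ t : ℕ, β h ^ t ≤ 1 :=
    fun h t => pow_le_one₀ (hβ h).1.le (hβ h).2.le
  have hH0 : (0:ℝ) < (H:ℝ) := by exact_mod_cast Nat.lt_of_lt_of_le Nat.zero_lt_one hH
  set m := L / (8 * H) with hmdef
  have hm0 : 0 < m := by rw [hmdef]; positivity
  have hHm : (H:ℝ) * m ≤ L / 8 := by
    rw [hmdef]
    rw [show (H:ℝ) * (L / (8 * H)) = L / 8 by field_simp]
  set U'm := Finset.univ.sup' hne (fun h => u' h m) with hU'def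
  have hU'm : ∀ h, u' h m ≤ U'm := fun h => Finset.le_sup' (fun h => u' h m) (Finset.mem_univ h)
  have hU'm0 : 0 ≤ U'm :=
    le_trans (hu'pos ⟨0, hH⟩ m hm0).le (hU'm ⟨0, hH⟩)
  set K1c : ℝ := 1 + (T+1) * Γ1 ^ (T+2) with hK1cdef
  have hK1c0 : 0 < K1c := by rw [hK1cdef]; positivity
  set M0 := U'm * K1c / bmin with hM0def
  have hM0 : U'm * K1c ≤ bmin * M0 := by
    rw [hM0def]
    rw [show bmin * (U'm * K1c / bmin) = U'm * K1c by field_simp]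
  -- Inada: pick per-household thresholds
  have hinada : ∀ h : Fin H, ∃ e, 0 < e ∧ ∀ x : ℝ, 0 < x → x < e → M0 ≤ u' h x := by
    intro h
    have h1 : ∀ᶠ x in nhdsWithin 0 (Set.Ioi 0), M0 ≤ u' h x :=
      (hu'zero h).eventually_ge_atTop M0
    rw [eventually_nhdsWithin_iff, Metric.eventually_nhds_iff] at h1
    obtain ⟨e, he0, he⟩ := h1
    refine ⟨e, he0, fun x hx hxe => he ?_ hx⟩
    rw [Real.dist_eq, sub_zero, abs_of_pos hx]
    exact hxe
  choose eF heF0 heF using hinada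
  set e1 := Finset.univ.inf' hne eF with he1def
  have he1 : 0 < e1 := by
    rw [he1def, Finset.lt_inf'_iff]
    exact fun h _ => heF0 h
  set K0c : ℝ := τ * H * (T+1) * Γ1 ^ (T+1) with hK0cdef
  have hK0c0 : 0 < K0c := by rw [hK0cdef]; positivity
  set ε := min (min (L/(16*H)) (τ*L/(16*(Γ1 * K0c)))) (e1/2) with hεdef
  have hε0 : 0 < ε := by
    rw [hεdef]
    refine lt_min (lt_min (by positivity) (by positivity)) (by positivity)
  have hε1 : ε ≤ L/(16*H) := le_trans (min_le_left _ _) (min_le_left _ _)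
  have hε2 : ε ≤ τ*L/(16*(Γ1 * K0c)) := le_trans (min_le_left _ _) (min_le_right _ _)
  have hε3 : ε ≤ e1/2 := min_le_right _ _
  have hεm : ε ≤ m := by
    rw [hmdef]
    refine le_trans hε1 ?_
    rw [div_le_div_iff₀ (by positivity) (by positivity)]
    nlinarith
  have hεH : (H:ℝ) * ε ≤ L / 16 := by
    have : (H:ℝ) * ε ≤ (H:ℝ) * (L/(16*H)) :=
      mul_le_mul_of_nonneg_left hε1 hH0.le
    refine le_trans this ?_
    rw [show (H:ℝ) * (L / (16 * H)) = L / 16 by field_simp]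
  have hεK : Γ1 * K0c * ε ≤ τ * L / 16 := by
    have h1 : Γ1 * K0c * ε ≤ Γ1 * K0c * (τ*L/(16*(Γ1 * K0c))) :=
      mul_le_mul_of_nonneg_left hε2 (by positivity)
    refine le_trans h1 ?_
    rw [show Γ1 * K0c * (τ*L/(16*(Γ1 * K0c))) = τ * L / 16 by field_simp]
  have hεI : ∀ h, M0 ≤ u' h ε := by
    intro h
    refine heF h ε hε0 ?_
    have : e1 ≤ eF h := Finset.inf'_le _ (Finset.mem_univ h)
    linarith
  -- finite-dimensional truncation
  set ext : (Fin H → Fin (T+1) → ℝ) → (Fin H → ℕ → ℝ) :=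
    fun x h t => if ht : t < T + 1 then x h ⟨t, ht⟩ else 1 with hextdef
  set Sc : (Fin H → ℕ → ℝ) → ℕ → ℝ :=
    fun c => RamseyAux.Sagg r ω τ δ L A0 (fun s => ∑ h, c h s) with hScdef
  set K : Set (Fin H → Fin (T+1) → ℝ) :=
    {x | (∀ h t, ε ≤ x h t) ∧ ∀ t ≤ T, 0 ≤ Sc (ext x) (t+1)} with hKdef
  have hextsum : ∀ (x : Fin H → Fin (T+1) → ℝ) (t : ℕ) (ht : t < T+1),
      (∑ h, ext x h t) = ∑ h, x h ⟨t, ht⟩ :=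
    fun x t ht => Finset.sum_congr rfl fun h _ => by
      simp only [hextdef, dif_pos ht]
  have hextpos : ∀ x ∈ K, ∀ (h : Fin H), ∀ t ≤ T, ε ≤ ext x h t := by
    intro x hx h t ht
    have ht' : t < T + 1 := by omega
    simp only [hextdef, dif_pos ht']
    exact hx.1 h _
  have hcontS : ∀ n, Continuous fun x : Fin H → Fin (T+1) → ℝ =>
      RamseyAux.Sagg r ω τ δ L A0 (fun s => ∑ h, ext x h s) n := by
    intro n
    induction n with
    | zero =>
        simp only [RamseyAux.Sagg]
        exact continuous_const
    | succ t ih =>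
        have hsum : Continuous fun x : Fin H → Fin (T+1) → ℝ => ∑ h, ext x h t := by
          by_cases ht : t < T + 1
          · have he : (fun x : Fin H → Fin (T+1) → ℝ => ∑ h, ext x h t)
                = fun x => ∑ h, x h ⟨t, ht⟩ := funext fun x => hextsum x t ht
            rw [he]
            exact continuous_finset_sum _ fun h _ =>
              (continuous_apply (⟨t, ht⟩ : Fin (T+1))).comp (continuous_apply h)
          · have he : (fun x : Fin H → Fin (T+1) → ℝ => ∑ h, ext x h t)
                = fun _ => ∑ _h : Fin H, (1:ℝ) := by
              funext x
              exact Finset.sum_congr rfl fun h _ => by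
                simp only [hextdef, dif_neg ht]
            rw [he]
            exact continuous_const
        simp only [RamseyAux.Sagg]
        exact (continuous_const.add (continuous_const.mul ih)).sub
          (continuous_const.mul hsum)
  have hKclosed : IsClosed K := by
    have h1 : IsClosed {x : Fin H → Fin (T+1) → ℝ | ∀ h t, ε ≤ x h t} := by
      have he : {x : Fin H → Fin (T+1) → ℝ | ∀ h t, ε ≤ x h t}
          = ⋂ h, ⋂ t, {x : Fin H → Fin (T+1) → ℝ | ε ≤ x h t} := by
        ext x; simp [Set.mem_iInter]
      rw [he]
      exact isClosed_iInter fun h => isClosed_iInter fun t =>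
        isClosed_le continuous_const ((continuous_apply t).comp (continuous_apply h))
    have h2 : IsClosed {x : Fin H → Fin (T+1) → ℝ | ∀ t ≤ T, 0 ≤ Sc (ext x) (t+1)} := by
      have he : {x : Fin H → Fin (T+1) → ℝ | ∀ t ≤ T, 0 ≤ Sc (ext x) (t+1)}
          = ⋂ t, ⋂ (_ : t ≤ T), {x : Fin H → Fin (T+1) → ℝ | 0 ≤ Sc (ext x) (t+1)} := by
        ext x; simp [Set.mem_iInter]
      rw [he]
      refine isClosed_iInter fun t => isClosed_iInter fun _ => ?_
      simp only [hScdef]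
      exact isClosed_le continuous_const (hcontS (t+1))
    have hKeq : K = {x : Fin H → Fin (T+1) → ℝ | ∀ h t, ε ≤ x h t}
        ∩ {x : Fin H → Fin (T+1) → ℝ | ∀ t ≤ T, 0 ≤ Sc (ext x) (t+1)} := by
      ext x; simp [hKdef, Set.mem_setOf_eq, Set.mem_inter_iff]
    rw [hKeq]
    exact h1.inter h2
  -- bounds
  set Mb : ℕ → ℝ := RamseyAux.Sagg r ω τ δ L A0 (fun _ => 0) with hMbdef
  have hS0K : ∀ x ∈ K, ∀ t ≤ T+1, 0 ≤ Sc (ext x) t := by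
    intro x hx t ht
    match t with
    | 0 => simp only [hScdef, RamseyAux.Sagg]; exact hA0.le
    | Nat.succ n => exact hx.2 n (by omega)
  have hSle : ∀ x ∈ K, ∀ t ≤ T+1, Sc (ext x) t ≤ Mb t := by
    intro x hx t
    induction t with
    | zero =>
        intro _
        simp only [hScdef, hMbdef, RamseyAux.Sagg]
        exact le_rfl
    | succ t ih =>
        intro ht
        have ht' : t ≤ T := by omega
        have ihs := ih (by omega)
        have hC0 : 0 ≤ ∑ h, ext x h t := by
          rw [hextsum x t (by omega)]
          exact Finset.sum_nonneg fun h _ => le_trans hε0.le (hx.1 h _)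
        simp only [hScdef, hMbdef, RamseyAux.Sagg] at ihs ⊢
        rw [← hγ t] at *
        have hγ0 := (hγpos t ht').le
        nlinarith [mul_le_mul_of_nonneg_left ihs hγ0, mul_nonneg hτ0.le hC0]
  set Bf : Fin (T+1) → ℝ := fun t => (τ * ω t * L + γ t * Mb t) / τ with hBfdef
  have hxle : ∀ x ∈ K, ∀ (h : Fin H) (t : Fin (T+1)), x h t ≤ Bf t := by
    intro x hx h t
    have ht' : (t:ℕ) ≤ T := by omega
    have hfe : 0 ≤ Sc (ext x) (↑t+1) := hx.2 ↑t ht'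
    have hSle' := hSle x hx ↑t (by omega)
    have hCx : (∑ h', ext x h' ↑t) = ∑ h', x h' t := by
      rw [hextsum x ↑t t.isLt]
    have hsingle : x h t ≤ ∑ h', x h' t :=
      Finset.single_le_sum (f := fun h' => x h' t)
        (fun i _ => le_trans hε0.le (hx.1 i t)) (Finset.mem_univ h)
    simp only [hScdef, RamseyAux.Sagg] at hfe
    rw [hCx] at hfe
    rw [← hγ ↑t] at hfe
    have hγ0 := (hγpos ↑t ht').le
    have hγMb : γ ↑t * Sc (ext x) ↑t ≤ γ ↑t * Mb ↑t :=
      mul_le_mul_of_nonneg_left hSle' hγ0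
    simp only [hScdef] at hγMb
    rw [hBfdef]
    rw [le_div_iff₀ hτ0]
    nlinarith
  have hKcpt : IsCompact K := by
    refine IsCompact.of_isClosed_subset
      (isCompact_univ_pi fun h : Fin H =>
        (isCompact_univ_pi fun t : Fin (T+1) => isCompact_Icc (a := ε) (b := Bf t)))
      hKclosed ?_
    intro x hx
    rw [Set.mem_univ_pi]
    intro h
    rw [Set.mem_univ_pi]
    intro t
    exact ⟨hx.1 h t, hxle x hx h t⟩
  have hKne : K.Nonempty := by
    refine ⟨fun _ _ => ε, fun h t => le_rfl, ?_⟩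
    have hpos : ∀ t ≤ T+1, 0 ≤ Sc (ext (fun _ _ => ε)) t := by
      intro t
      induction t with
      | zero =>
          intro _
          simp only [hScdef, RamseyAux.Sagg]
          exact hA0.le
      | succ t ih =>
          intro ht
          have ht' : t ≤ T := by omega
          have ihs := ih (by omega)
          have hCc : (∑ h, ext (fun _ _ => ε) h t) = (H:ℝ) * ε := by
            rw [hextsum (fun _ _ => ε) t (by omega)]
            simp [Finset.sum_const, Finset.card_univ, nsmul_eq_mul]
          have hCc' : τ * (∑ h, ext (fun _ _ => ε) h t) = τ * ((H:ℝ) * ε) := by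
            rw [hCc]
          have hg : 0 < τ * (1 + r t) - δ := by
            have hh := hγpos t ht'
            rw [hγ t] at hh
            exact hh
          simp only [hScdef, RamseyAux.Sagg] at ihs ⊢
          have h1 : τ * L ≤ τ * ω t * L := by
            nlinarith [hω t ht', mul_pos hτ0 hL]
          have h2 : 0 ≤ (τ * (1 + r t) - δ) * RamseyAux.Sagg r ω τ δ L A0
              (fun s => ∑ h, ext (fun _ _ => ε) h s) t :=
            mul_nonneg hg.le ihs
          have h3 : τ * ((H:ℝ)*ε) ≤ τ * (L/16) :=
            mul_le_mul_of_nonneg_left hεH hτ0.le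
          have h4 := mul_pos hτ0 hL
          linarith
    exact fun t ht => hpos (t+1) (by omega)
  -- the objective and its maximizer
  set Wf : (Fin H → ℕ → ℝ) → ℝ :=
    fun c => ∑ h, ∑ t ∈ Finset.range (T+1), β h ^ t * u h (c h t) with hWfdef
  have hu_cont : ∀ h, ContinuousOn (u h) (Set.Ioi 0) := fun h x hx =>
    ((hu1 h x hx).differentiableAt.continuousAt).continuousWithinAt
  have hWcont : ContinuousOn (fun x => Wf (ext x)) K := by
    simp only [hWfdef]
    apply continuousOn_finset_sum
    intro h _
    apply continuousOn_finset_sum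
    intro t htm
    have ht : t < T + 1 := Finset.mem_range.mp htm
    have he : (fun x : Fin H → Fin (T+1) → ℝ => β h ^ t * u h (ext x h t))
        = fun x => β h ^ t * u h (x h ⟨t, ht⟩) := by
      funext x
      simp only [hextdef, dif_pos ht]
    rw [he]
    apply ContinuousOn.mul continuousOn_const
    apply ContinuousOn.comp (hu_cont h)
      (Continuous.continuousOn
        ((continuous_apply (⟨t, ht⟩ : Fin (T+1))).comp (continuous_apply h)))
    intro x hx
    exact Set.mem_Ioi.mpr (lt_of_lt_of_le hε0 (hx.1 h ⟨t, ht⟩))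
  obtain ⟨xb, hxbK, hxbMax⟩ := hKcpt.exists_isMaxOn hKne hWcont
  -- assemble the Pareto optimum
  set cb : Fin H → ℕ → ℝ := ext xb with hcbdef
  have hcbpos : ∀ h : Fin H, ∀ t ≤ T, 0 < cb h t := by
    intro h t ht
    have ht' : t < T + 1 := by omega
    have := hxbK.1 h ⟨t, ht'⟩
    simp only [hcbdef, hextdef, dif_pos ht']
    linarith
  have hcbfeas : ∀ t ≤ T, 0 ≤ Sc cb (t+1) := hxbK.2
  set ab : Fin H → ℕ → ℝ :=
    fun h => RamseyAux.aPath r ω τ δ (l h) (a0 h) (cb h) with habdef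
  have hab0 : ∀ h, ab h 0 = a0 h := fun h => rfl
  have habrec : ∀ h : Fin H, ∀ t ≤ T,
      ab h (t+1) = τ * ω t * l h + (τ * (1 + r t) - δ) * ab h t - τ * cb h t :=
    fun h t _ => rfl
  have hsumab : ∀ t ≤ T+1, ∑ h, ab h t = Sc cb t := by
    intro t ht
    rw [RamseyAux.sum_eq_Sagg r ω τ δ l a0 cb ab hab0 T habrec t ht]
  have hFeas : Feasible H T r ω l τ δ a0 cb ab :=
    ⟨hab0, hcbpos, habrec, fun t ht => by
      rw [hsumab (t+1) (by omega)]; exact hcbfeas t ht⟩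
  refine ⟨cb, ab, hFeas, ?_⟩
  rintro ⟨c', a', hfeas', hle, hs, hslt⟩
  have hsum' : ∀ t ≤ T+1, ∑ h, a' h t = Sc c' t := by
    intro t ht
    rw [RamseyAux.sum_eq_Sagg r ω τ δ l a0 c' a' hfeas'.1 T hfeas'.2.2.1 t ht]
  have hfeasA' : ∀ t ≤ T, 0 ≤ Sc c' (t+1) := fun t ht => by
    rw [← hsum' (t+1) (by omega)]
    exact hfeas'.2.2.2 t ht
  have hpos' : ∀ h : Fin H, ∀ t ≤ T, 0 < c' h t := hfeas'.2.1
  have hWlt : Wf cb < Wf c' := by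
    simp only [hWfdef]
    refine Finset.sum_lt_sum ?_ ⟨hs, Finset.mem_univ hs, ?_⟩
    · intro h _
      have := hle h
      simp only [Phi] at this
      linarith
    · simp only [Phi] at hslt
      linarith
  have hεK' : Γ1 * (τ * ↑H * (↑T + 1) * Γ1 ^ (T + 1)) * ε ≤ τ * L / 16 := by
    rw [hK0cdef] at hεK
    exact hεK
  have hM0' : U'm * (1 + (↑T + 1) * Γ1 ^ (T + 2)) ≤ bmin * M0 := by
    rw [hK1cdef] at hM0
    exact hM0
  obtain ⟨yy, hyyε, hyyfeas, hyyW⟩ := RamseyAux.transfer hne r ω β τ δ L A0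
    u u' u'' hu1 hu2 hu'pos hu''neg hτ0 hL hA0 hω γ hγ hγpos Γ1 hΓ1 hγΓ
    bmin hb0 hbmin hβ1 m hm0 hHm U'm hU'm0 hU'm M0 hM0' ε hε0 hεm hεH hεK'
    hεI c' hpos' hfeasA'
  set x' : Fin H → Fin (T+1) → ℝ := fun h t => yy h ↑t with hx'def
  have hx'ext : ∀ h : Fin H, ∀ t ≤ T, ext x' h t = yy h t := by
    intro h t ht
    have ht' : t < T + 1 := by omega
    simp only [hextdef, dif_pos ht', hx'def]
  have hx'K : x' ∈ K := by
    constructor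
    · intro h t
      have := hyyε h ↑t (Nat.lt_succ_iff.mp t.isLt)
      simp only [hx'def]
      exact this
    · intro t ht
      have hcongr : RamseyAux.Sagg r ω τ δ L A0 (fun s => ∑ h, ext x' h s) (t+1)
          = RamseyAux.Sagg r ω τ δ L A0 (fun s => ∑ h, yy h s) (t+1) := by
        apply RamseyAux.Sagg_congr
        intro s hs
        exact Finset.sum_congr rfl fun h _ => hx'ext h s (by omega)
      simp only [hScdef]
      rw [hcongr]
      exact hyyfeas t ht
  have hWyy : Wf (ext x') = ∑ h, ∑ t ∈ Finset.range (T+1), β h ^ t * u h (yy h t) := by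
    simp only [hWfdef]
    refine Finset.sum_congr rfl fun h _ => Finset.sum_congr rfl fun t htm => ?_
    rw [hx'ext h t (Nat.lt_succ_iff.mp (Finset.mem_range.mp htm))]
  have hchain : Wf c' ≤ Wf (ext x') := by
    rw [hWyy]
    exact hyyW
  have hmax : Wf (ext x') ≤ Wf cb := hxbMax hx'K
  linarith
end

section
/- For every feasible point z̄ ∈ 𝒰 and its active set I(z̄) := {j ∈ {1,…,T+1} : Σ_{h=1}^H ā_j^h = 0}, the family of gradient vectors {∇f_t^h : t = 0,…,T, h = 1,…,H} ∪ {∇g_j : j ∈ I(z̄)} is linearly independent in ℝ^{2H(T+1)}; that is, if Σ_{t,h} λ_t^h ∇f_t^h + Σ_{j ∈ I(z̄)} ς_j ∇g_j = 0 then all λ_t^h = 0 and all ς_j = 0. -/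
/-- Coordinates of `ℝ^{2H(T+1)}`: `Sum.inl (h, t)` is the consumption variable
`c_t^h` (`t = 0,…,T`) and `Sum.inr (h, s)` is the capital variable `a_{s+1}^h`
(`s = 0,…,T`, representing `a_1,…,a_{T+1}`). -/
abbrev Coord (H T : ℕ) := (Fin H × Fin (T + 1)) ⊕ (Fin H × Fin (T + 1))

/-- The (constant) gradient of the affine equality constraint
`f_t^h(z) = a_{t+1}^h − τ ω_t l^h − (τ(1+r_t) − δ) a_t^h + τ c_t^h`:
entry `τ` at `c_t^h`, entry `1` at `a_{t+1}^h`, entry `−(τ(1+r_t) − δ)` at `a_t^h`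
(the latter only when `t ≥ 1`, since `a_0^h` is fixed and not a variable). -/
def gradF (H T : ℕ) (r : ℕ → ℝ) (τ δ : ℝ) (h : Fin H) (t : Fin (T + 1)) :
    Coord H T → ℝ
  | Sum.inl p => if p = (h, t) then τ else 0
  | Sum.inr p =>
      if p = (h, t) then 1
      else if p.1 = h ∧ (p.2 : ℕ) + 1 = (t : ℕ) then -(τ * (1 + r t) - δ)
      else 0

/-- The (constant) gradient of the inequality constraint
`g_{j+1}(z) = −Σ_h a_{j+1}^h`: entry `−1` at each `a_{j+1}^h`. -/
def gradG (H T : ℕ) (j : Fin (T + 1)) : Coord H T → ℝ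
  | Sum.inl _ => 0
  | Sum.inr p => if p.2 = j then -1 else 0

/-- for every feasible point and its active set
`I(z̄) = {j : Σ_h ā_j^h = 0}`, the gradients `∇f_t^h` together with `∇g_j`,
`j ∈ I(z̄)`, are linearly independent. -/
theorem gradients_linearly_independent (H T : ℕ) (hH : 1 ≤ H)
    (r ω : ℕ → ℝ) (l β : Fin H → ℝ) (τ δ : ℝ) (a0 : Fin H → ℝ)
    (hr : ∀ t ≤ T, 0 < r t) (hω : ∀ t ≤ T, 1 ≤ ω t)
    (hl : ∀ h, 0 < l h) (hβ : ∀ h, 0 < β h ∧ β h < 1)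
    (hτ : 1 ≤ τ) (hδ0 : 0 < δ) (hδ1 : δ < 1)
    (ha0 : 0 < ∑ h, a0 h)
    (c a : Fin H → ℕ → ℝ) (hfeas : Feasible H T r ω l τ δ a0 c a)
    (lam : Fin H → Fin (T + 1) → ℝ) (ς : Fin (T + 1) → ℝ)
    -- `ς` is supported on the active set `I(z̄)`:
    (hsupp : ∀ j : Fin (T + 1), (∑ h, a h ((j : ℕ) + 1)) ≠ 0 → ς j = 0)
    (hzero : (∑ h : Fin H, ∑ t : Fin (T + 1), lam h t • gradF H T r τ δ h t)
        + (∑ j : Fin (T + 1), ς j • gradG H T j) = 0) :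
    (∀ (h : Fin H) (t : Fin (T + 1)), lam h t = 0) ∧
    (∀ j : Fin (T + 1), ς j = 0) := by
  have hτ0 : τ ≠ 0 := by linarith
  have hlam : ∀ (h : Fin H) (t : Fin (T + 1)), lam h t = 0 := by
    intro h t
    have := congrFun hzero (Sum.inl (h, t))
    simp [gradF, gradG, Finset.sum_apply, Pi.add_apply, Pi.smul_apply,
      mul_ite, ite_and, Finset.sum_ite_eq, Finset.sum_ite_eq', Prod.ext_iff] at this
    rcases this with h1 | h1
    · exact h1
    · exact absurd h1 hτ0
  refine ⟨hlam, ?_⟩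
  intro j
  have h0 : Fin H := ⟨0, by omega⟩
  have := congrFun hzero (Sum.inr (h0, j))
  simp [gradF, gradG, Finset.sum_apply, Pi.add_apply, Pi.smul_apply,
    mul_ite, ite_and, Finset.sum_ite_eq, Finset.sum_ite_eq', Prod.ext_iff, hlam] at this
  linarith
end

section
/- A feasible point z̄ = ((c̄_t^h),(ā_t^h)) ∈ 𝒰 of the generalized Ramsey model with default is Pareto optimal if and only if there exist multipliers θ = (θ_1,…,θ_H) ∈ ℝ^H with at least one θ_h ≠ 0, λ = (λ_t^h)_{t=0,…,T; h=1,…,H} ∈ ℝ^{H(T+1)} and ν = (ν_1,…,ν_{T+1}) ∈ ℝ^{T+1} such that: (I) −θ_h (β^h)^t (u^h)'(c̄_t^h) + τ λ_t^h = 0 for t = 0,…,T and h = 1,…,H; (II) −ν_t + λ_{t−1}^h − λ_t^h(τ(1+r_t) − δ) = 0 for t = 1,…,T and h = 1,…,H; (III) λ_T^h − ν_{T+1} = 0 for h = 1,…,H; (IV) ν_t Σ_{h=1}^H ā_t^h = 0 for t = 1,…,T+1; and (V) θ_h ≥ 0 for all h and ν_t ≥ 0 for all t = 1,…,T+1. 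-/
open Finset Filter Set

/-! ### Auxiliary machinery -/

/-- scalar asset-perturbation recursion -/
def eS (A : ℕ → ℝ) (τ : ℝ) (f : ℕ → ℝ) : ℕ → ℝ
  | 0 => 0
  | t+1 => A t * eS A τ f t - τ * f t

lemma eS_succ (A : ℕ → ℝ) (τ : ℝ) (f : ℕ → ℝ) (t : ℕ) :
    eS A τ f (t+1) = A t * eS A τ f t - τ * f t := rfl

lemma eS_zero_of_lt (A : ℕ → ℝ) (τ : ℝ) (f : ℕ → ℝ) {t : ℕ}
    (hf : ∀ s < t, f s = 0) : eS A τ f t = 0 := by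
  induction t with
  | zero => rfl
  | succ n ih =>
    rw [eS_succ, ih (fun s hs => hf s (hs.trans (Nat.lt_succ_self n))),
      hf n (Nat.lt_succ_self n)]
    ring

lemma eS_zero_after (A : ℕ → ℝ) (τ : ℝ) (f : ℕ → ℝ) {n : ℕ}
    (h0 : eS A τ f n = 0) (hf : ∀ s, n ≤ s → f s = 0) :
    ∀ m, n ≤ m → eS A τ f m = 0 := by
  intro m hm
  induction m, hm using Nat.le_induction with
  | base => exact h0
  | succ m hm ih => rw [eS_succ, ih, hf m hm]; ring

lemma eS_neg (A : ℕ → ℝ) (τ : ℝ) (f : ℕ → ℝ) (t : ℕ) :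
    eS A τ (fun s => -f s) t = -eS A τ f t := by
  induction t with
  | zero => simp [eS]
  | succ n ih => rw [eS_succ, eS_succ, ih]; ring

lemma eS_fun_zero (A : ℕ → ℝ) (τ : ℝ) (t : ℕ) :
    eS A τ (fun _ => (0:ℝ)) t = 0 :=
  eS_zero_of_lt _ _ _ (fun _ _ => rfl)

/-- positivity near zero from positive derivative -/
lemma eventually_pos_of_hasDerivAt {F : ℝ → ℝ} {D : ℝ}
    (hF : HasDerivAt F D 0) (hD : 0 < D) :
    ∀ᶠ ε in nhdsWithin 0 (Set.Ioi 0), F 0 < F ε := by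
  have h1 : Tendsto (slope F 0) (nhdsWithin 0 {(0:ℝ)}ᶜ) (nhds D) :=
    hasDerivAt_iff_tendsto_slope.mp hF
  have h2 : nhdsWithin (0:ℝ) (Set.Ioi 0) ≤ nhdsWithin 0 {(0:ℝ)}ᶜ :=
    nhdsWithin_mono _ (fun x hx => ne_of_gt hx)
  have h3 : ∀ᶠ ε in nhdsWithin (0:ℝ) (Set.Ioi 0), 0 < slope F 0 ε :=
    (h1.mono_left h2).eventually_const_lt hD
  filter_upwards [h3, self_mem_nhdsWithin] with ε hs (hε : ε ∈ Set.Ioi 0)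
  have hε0 : (0:ℝ) < ε := hε
  have : slope F 0 ε = (F ε - F 0) / ε := by
    simp [slope_def_field]
  rw [this] at hs
  nlinarith [mul_pos hs hε0, div_mul_cancel₀ (F ε - F 0) (ne_of_gt hε0)]

/-- concavity gradient inequality from negative second derivative -/
lemma concave_ineq {f f' f'' : ℝ → ℝ}
    (hf : ∀ x > (0:ℝ), HasDerivAt f (f' x) x)
    (hf2 : ∀ x > (0:ℝ), HasDerivAt f' (f'' x) x)
    (h2 : ∀ x > (0:ℝ), f'' x < 0) {x y : ℝ} (hx : 0 < x) (hy : 0 < y) :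
    f y - f x ≤ f' x * (y - x) := by
  have hanti : StrictAntiOn f' (Set.Ioi 0) := by
    apply strictAntiOn_of_deriv_neg (convex_Ioi 0)
    · exact fun z hz => ((hf2 z hz).continuousAt).continuousWithinAt
    · intro z hz
      rw [interior_Ioi] at hz
      rw [(hf2 z hz).deriv]
      exact h2 z hz
  rcases lt_trichotomy x y with hxy | hxy | hxy
  · obtain ⟨ξ, hξ, hslope⟩ := exists_hasDerivAt_eq_slope f f' hxy
      (fun z hz => ((hf z (lt_of_lt_of_le hx hz.1)).continuousAt).continuousWithinAt)
      (fun z hz => hf z (lt_trans hx hz.1))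
    rw [eq_div_iff (sub_ne_zero.mpr hxy.ne')] at hslope
    have hfx : f y - f x = f' ξ * (y - x) := hslope.symm
    have : f' ξ < f' x := hanti hx (lt_trans hx hξ.1) hξ.1
    nlinarith
  · simp [hxy]
  · obtain ⟨ξ, hξ, hslope⟩ := exists_hasDerivAt_eq_slope f f' hxy
      (fun z hz => ((hf z (lt_of_lt_of_le hy hz.1)).continuousAt).continuousWithinAt)
      (fun z hz => hf z (lt_trans hy hz.1))
    rw [eq_div_iff (sub_ne_zero.mpr hxy.ne')] at hslope
    have hfx : f x - f y = f' ξ * (x - y) := hslope.symm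
    have : f' x < f' ξ := hanti (lt_trans hy hξ.1) hx hξ.2
    nlinarith

lemma tendsto_affine (K M : ℝ) :
    Filter.Tendsto (fun ε : ℝ => K + ε * M) (nhdsWithin 0 (Set.Ioi 0)) (nhds K) := by
  have h : Continuous fun ε : ℝ => K + ε * M := by continuity
  have h2 := h.tendsto 0
  simp only [zero_mul, add_zero] at h2
  exact h2.mono_left nhdsWithin_le_nhds

lemma sum_ite_one (T t1 : ℕ) (h1 : t1 ≤ T) (v : ℝ) (w : ℕ → ℝ) :
    ∑ s ∈ Finset.range (T+1), w s * (if s = t1 then v else 0) = w t1 * v := by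
  rw [Finset.sum_eq_single t1]
  · simp
  · intro b _ hb; simp [hb]
  · intro hmem; exact absurd (Finset.mem_range.mpr (Nat.lt_succ_of_le h1)) hmem

lemma sum_ite_two (T t1 t2 : ℕ) (h1 : t1 ≤ T) (h2 : t2 ≤ T) (hne : t1 ≠ t2)
    (v1 v2 : ℝ) (w : ℕ → ℝ) :
    ∑ s ∈ Finset.range (T+1), w s * (if s = t1 then v1 else if s = t2 then v2 else 0)
      = w t1 * v1 + w t2 * v2 := by
  have key : ∀ s, w s * (if s = t1 then v1 else if s = t2 then v2 else 0)
      = w s * (if s = t1 then v1 else 0) + w s * (if s = t2 then v2 else 0) := by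
    intro s
    by_cases hs1 : s = t1
    · subst hs1
      rw [if_pos rfl, if_pos rfl, if_neg hne, mul_zero, add_zero]
    · rw [if_neg hs1, if_neg hs1, mul_zero, zero_add]
  rw [Finset.sum_congr rfl (fun s _ => key s), Finset.sum_add_distrib,
    sum_ite_one T t1 h1, sum_ite_one T t2 h2]

lemma sum_house_one {H : ℕ} (h1 : Fin H) (X : Fin H → ℝ)
    (hX : ∀ h, h ≠ h1 → X h = 0) : ∑ h, X h = X h1 := by
  rw [Finset.sum_eq_single h1]
  · exact fun b _ hb => hX b hb
  · intro hmem; exact absurd (Finset.mem_univ h1) hmem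

lemma sum_house_two {H : ℕ} (h1 h2 : Fin H) (hne : h1 ≠ h2) (X : Fin H → ℝ)
    (hX : ∀ h, h ≠ h1 → h ≠ h2 → X h = 0) : ∑ h, X h = X h1 + X h2 := by
  classical
  exact Finset.sum_eq_add_of_mem h1 h2 (Finset.mem_univ _) (Finset.mem_univ _) hne
    (fun k _ hk => hX k (fun e => hk.1 e) (fun e => hk.2 e))

/-- Master perturbation lemma. -/
lemma master {H T : ℕ} (r ω : ℕ → ℝ) (l β : Fin H → ℝ) (τ δ : ℝ) (a0 : Fin H → ℝ)
    (u u' : Fin H → ℝ → ℝ)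
    (hu1 : ∀ h : Fin H, ∀ x > (0:ℝ), HasDerivAt (u h) (u' h x) x)
    (c a : Fin H → ℕ → ℝ) (hfeas : Feasible H T r ω l τ δ a0 c a)
    (hno : ¬ ∃ c' a' : Fin H → ℕ → ℝ, Feasible H T r ω l τ δ a0 c' a' ∧
      (∀ h : Fin H, Phi T β u c' h ≤ Phi T β u c h) ∧
      (∃ h : Fin H, Phi T β u c' h < Phi T β u c h))
    (d : Fin H → ℕ → ℝ)
    (hcon : ∀ t, 1 ≤ t → t ≤ T+1 →
      0 ≤ ∑ h, eS (fun s => τ*(1+r s)-δ) τ (d h) t ∨ 0 < ∑ h, a h t)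
    (hgain : ∀ h : Fin H, (∀ t ≤ T, d h t = 0) ∨
      0 < ∑ t ∈ Finset.range (T+1), β h ^ t * u' h (c h t) * d h t)
    (hne : ∃ h : Fin H, ¬ (∀ t ≤ T, d h t = 0)) : False := by
  obtain ⟨hfa0, hfc, hfb, hfs⟩ := hfeas
  set A : ℕ → ℝ := fun s => τ*(1+r s)-δ with hA
  set e : Fin H → ℕ → ℝ := fun h => eS A τ (d h) with he
  set F : Fin H → ℝ → ℝ :=
    fun h ε => ∑ t ∈ Finset.range (T+1), β h ^ t * u h (c h t + ε * d h t) with hF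
  have hFderiv : ∀ h : Fin H,
      HasDerivAt (F h) (∑ t ∈ Finset.range (T+1), β h ^ t * u' h (c h t) * d h t) 0 := by
    intro h
    have : ∀ t ∈ Finset.range (T+1),
        HasDerivAt (fun ε : ℝ => β h ^ t * u h (c h t + ε * d h t))
          (β h ^ t * (u' h (c h t) * d h t)) 0 := by
      intro t ht
      have hct : 0 < c h t := hfc h t (Nat.lt_succ_iff.mp (Finset.mem_range.mp ht))
      have hinner : HasDerivAt (fun ε : ℝ => c h t + ε * d h t) (d h t) 0 := by
        simpa using ((hasDerivAt_id (0:ℝ)).mul_const (d h t)).const_add (c h t)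
      have hpt : HasDerivAt (u h) (u' h (c h t)) (c h t + 0 * d h t) := by
        rw [zero_mul, add_zero]; exact hu1 h (c h t) hct
      exact ((hpt.comp (0:ℝ) hinner)).const_mul (β h ^ t)
    have := HasDerivAt.fun_sum this
    convert this using 2 with t
    · rfl
    · rfl
    · ring
  have hEc : ∀ᶠ ε in nhdsWithin (0:ℝ) (Set.Ioi 0),
      ∀ h : Fin H, ∀ t ∈ Finset.range (T+1), 0 < c h t + ε * d h t := by
    rw [Filter.eventually_all]
    intro h
    rw [Filter.eventually_all_finset]
    intro t ht
    have hct : 0 < c h t := hfc h t (Nat.lt_succ_iff.mp (Finset.mem_range.mp ht))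
    exact (tendsto_affine (c h t) (d h t)).eventually_const_lt hct
  have hEa : ∀ᶠ ε in nhdsWithin (0:ℝ) (Set.Ioi 0),
      ∀ t ∈ Finset.range (T+1), 0 ≤ ∑ h, a h (t+1) + ε * ∑ h, e h (t+1) := by
    rw [Filter.eventually_all_finset]
    intro t ht
    have ht' : t ≤ T := Nat.lt_succ_iff.mp (Finset.mem_range.mp ht)
    rcases hcon (t+1) (Nat.le_add_left 1 t) (by omega) with hpos | hslack
    · filter_upwards [self_mem_nhdsWithin] with ε (hε : ε ∈ Set.Ioi 0)
      have h1 : 0 ≤ ∑ h, a h (t+1) := hfs t ht'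
      have h2 : 0 ≤ ε * ∑ h, e h (t+1) := mul_nonneg (le_of_lt hε) hpos
      linarith
    · filter_upwards [(tendsto_affine (∑ h, a h (t+1)) (∑ h, e h (t+1))).eventually_const_lt
        hslack] with ε hε
      exact le_of_lt hε
  have hEg : ∀ᶠ ε in nhdsWithin (0:ℝ) (Set.Ioi 0),
      ∀ h : Fin H, (∀ t ≤ T, d h t = 0) ∨ F h 0 < F h ε := by
    rw [Filter.eventually_all]
    intro h
    rcases hgain h with h0 | hpos
    · exact Filter.Eventually.of_forall (fun ε => Or.inl h0)
    · filter_upwards [eventually_pos_of_hasDerivAt (hFderiv h) hpos] with ε hε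
      exact Or.inr hε
  obtain ⟨ε, hc', ha', hg'⟩ := (hEc.and (hEa.and hEg)).exists
  apply hno
  refine ⟨fun h t => c h t + ε * d h t, fun h t => a h t + ε * e h t, ⟨?_, ?_, ?_, ?_⟩, ?_, ?_⟩
  · intro h
    show a h 0 + ε * e h 0 = a0 h
    have h0 : e h 0 = 0 := rfl
    rw [h0, mul_zero, add_zero, hfa0]
  · intro h t ht
    exact hc' h t (Finset.mem_range.mpr (Nat.lt_succ_of_le ht))
  · intro h t ht
    show a h (t+1) + ε * e h (t+1) =
      τ * ω t * l h + (τ * (1 + r t) - δ) * (a h t + ε * e h t) - τ * (c h t + ε * d h t)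
    have hb := hfb h t ht
    have hee : e h (t+1) = A t * e h t - τ * d h t := rfl
    rw [hee, hb, hA]
    ring
  · intro t ht
    have := ha' t (Finset.mem_range.mpr (Nat.lt_succ_of_le ht))
    calc (0:ℝ) ≤ ∑ h, a h (t+1) + ε * ∑ h, e h (t+1) := this
    _ = ∑ h, (a h (t+1) + ε * e h (t+1)) := by
        rw [Finset.sum_add_distrib, Finset.mul_sum]
  · intro h
    rcases hg' h with h0 | hlt
    · apply le_of_eq
      unfold Phi
      congr 1
      apply Finset.sum_congr rfl
      intro t ht
      show β h ^ t * u h (c h t + ε * d h t) = β h ^ t * u h (c h t)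
      rw [h0 t (Nat.lt_succ_iff.mp (Finset.mem_range.mp ht)), mul_zero, add_zero]
    · apply le_of_lt
      unfold Phi
      have hF0 : F h 0 = ∑ t ∈ Finset.range (T+1), β h ^ t * u h (c h t) := by
        rw [hF]; simp
      have hFe : F h ε = ∑ t ∈ Finset.range (T+1), β h ^ t * u h (c h t + ε * d h t) := rfl
      rw [← hFe, ← hF0]
      linarith
  · obtain ⟨h, hh⟩ := hne
    refine ⟨h, ?_⟩
    rcases hg' h with h0 | hlt
    · exact absurd h0 hh
    · unfold Phi
      have hF0 : F h 0 = ∑ t ∈ Finset.range (T+1), β h ^ t * u h (c h t) := by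
        rw [hF]; simp
      have hFe : F h ε = ∑ t ∈ Finset.range (T+1), β h ^ t * u h (c h t + ε * d h t) := rfl
      rw [← hFe, ← hF0]
      linarith

/-- a feasible point is Pareto optimal iff there exist multipliers
`θ ∈ ℝ^H` (at least one nonzero), `λ ∈ ℝ^{H(T+1)}` and `ν ∈ ℝ^{T+1}` satisfying
the first order conditions (I)–(V). -/
theorem pareto_iff_multipliers (H T : ℕ) (hH : 1 ≤ H)
    (r ω : ℕ → ℝ) (l β : Fin H → ℝ) (τ δ : ℝ) (a0 : Fin H → ℝ)
    (hr : ∀ t ≤ T, 0 < r t) (hω : ∀ t ≤ T, 1 ≤ ω t)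
    (hl : ∀ h, 0 < l h) (hβ : ∀ h, 0 < β h ∧ β h < 1)
    (hτ : 1 ≤ τ) (hδ0 : 0 < δ) (hδ1 : δ < 1)
    (ha0 : 0 < ∑ h, a0 h)
    (u u' u'' : Fin H → ℝ → ℝ)
    (hu1 : ∀ h : Fin H, ∀ x > (0:ℝ), HasDerivAt (u h) (u' h x) x)
    (hu2 : ∀ h : Fin H, ∀ x > (0:ℝ), HasDerivAt (u' h) (u'' h x) x)
    (hu2c : ∀ h : Fin H, ContinuousOn (u'' h) (Set.Ioi 0))
    (hu'pos : ∀ h : Fin H, ∀ x > (0:ℝ), 0 < u' h x)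
    (hu''neg : ∀ h : Fin H, ∀ x > (0:ℝ), u'' h x < 0)
    (hu'top : ∀ h : Fin H, Filter.Tendsto (u' h) Filter.atTop (nhds 0))
    (hu'zero : ∀ h : Fin H,
      Filter.Tendsto (u' h) (nhdsWithin 0 (Set.Ioi 0)) Filter.atTop)
    (c a : Fin H → ℕ → ℝ) (hfeas : Feasible H T r ω l τ δ a0 c a) :
    Pareto H T r ω l β τ δ a0 u c a ↔
      ∃ (θ : Fin H → ℝ) (lam : Fin H → ℕ → ℝ) (ν : ℕ → ℝ),
        (∃ h : Fin H, θ h ≠ 0) ∧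
        -- (I)
        (∀ h : Fin H, ∀ t ≤ T,
          -θ h * β h ^ t * u' h (c h t) + τ * lam h t = 0) ∧
        -- (II)
        (∀ h : Fin H, ∀ t, 1 ≤ t → t ≤ T →
          -ν t + lam h (t - 1) - lam h t * (τ * (1 + r t) - δ) = 0) ∧
        -- (III)
        (∀ h : Fin H, lam h T - ν (T + 1) = 0) ∧
        -- (IV)
        (∀ t, 1 ≤ t → t ≤ T + 1 → ν t * ∑ h, a h t = 0) ∧
        -- (V)
        (∀ h : Fin H, 0 ≤ θ h) ∧ (∀ t, 1 ≤ t → t ≤ T + 1 → 0 ≤ ν t) := by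
  have hτ0 : (0:ℝ) < τ := lt_of_lt_of_le one_pos hτ
  set A : ℕ → ℝ := fun s => τ*(1+r s)-δ with hA
  have hApos : ∀ t ≤ T, 0 < A t := by
    intro t ht
    have := hr t ht
    have h1 : 1 * (1 + r t) ≤ τ * (1 + r t) := by nlinarith
    simp only [hA]
    nlinarith
  set g : Fin H → ℕ → ℝ := fun h t => β h ^ t * u' h (c h t) with hg
  obtain ⟨hfa0, hfc, hfb, hfs⟩ := hfeas
  have hgpos : ∀ h : Fin H, ∀ t ≤ T, 0 < g h t := by
    intro h t ht
    exact mul_pos (pow_pos (hβ h).1 t) (hu'pos h (c h t) (hfc h t ht))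
  have hfeas' : Feasible H T r ω l τ δ a0 c a := ⟨hfa0, hfc, hfb, hfs⟩
  set h0 : Fin H := ⟨0, hH⟩ with hh0
  constructor
  · rintro ⟨-, hno⟩
    -- Claim 1 : aggregate assets vanish at T+1
    have claim1 : ∑ h, a h (T+1) = 0 := by
      by_contra hs0
      have hs : 0 < ∑ h, a h (T+1) := lt_of_le_of_ne (hfs T le_rfl) (Ne.symm hs0)
      set d : Fin H → ℕ → ℝ :=
        fun h => if h = h0 then (fun s => if s = T then (1:ℝ) else 0) else fun _ => 0 with hd
      apply master r ω l β τ δ a0 u u' hu1 c a hfeas' hno d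
      · intro t ht1 ht2
        rcases Nat.lt_or_ge t (T+1) with htT | htT
        · left
          have : ∀ h : Fin H, eS A τ (d h) t = 0 := by
            intro h
            apply eS_zero_of_lt
            intro s hs'
            by_cases hh : h = h0 <;> simp [hd, hh]
            omega
          rw [show (fun s => τ*(1+r s)-δ) = A from rfl]
          rw [Finset.sum_congr rfl (fun h _ => this h)]
          simp
        · right
          have : t = T + 1 := by omega
          rw [this]
          exact hs
      · intro h
        by_cases hh : h = h0
        · right
          have hdh : d h = fun s => if s = T then (1:ℝ) else 0 := by simp [hd, hh]
          rw [hdh, sum_ite_one T T le_rfl 1 (fun s => β h ^ s * u' h (c h s))]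
          rw [mul_one]
          exact hgpos h T le_rfl
        · left
          intro t ht
          simp [hd, hh]
      · refine ⟨h0, fun hall => ?_⟩
        have := hall T le_rfl
        simp [hd] at this
    -- Claim 2 : cross-household proportionality
    have key2 : ∀ h1 h2 : Fin H, ∀ t ≤ T,
        g h1 t * g h2 T < g h2 t * g h1 T → False := by
      intro h1 h2 t ht hlt
      have hne12 : h1 ≠ h2 := by
        rintro rfl
        exact lt_irrefl _ hlt
      have htT : t ≠ T := by
        intro hEq
        rw [hEq] at hlt
        nlinarith [hlt, mul_comm (g h1 T) (g h2 T)]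
      have hgT1 : 0 < g h1 T := hgpos h1 T le_rfl
      have hgT2 : 0 < g h2 T := hgpos h2 T le_rfl
      set r1 : ℝ := g h1 t / g h1 T with hr1
      set r2 : ℝ := g h2 t / g h2 T with hr2
      have hr12 : r1 < r2 := by
        rw [hr1, hr2, div_lt_div_iff₀ hgT1 hgT2]
        exact hlt
      set η : ℝ := (r1 + r2)/2 with hη
      have hη1 : r1 < η := by rw [hη]; linarith
      have hη2 : η < r2 := by rw [hη]; linarith
      set f1 : ℕ → ℝ := fun s => if s = t then (-1:ℝ) else if s = T then η else 0 with hf1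
      set f2 : ℕ → ℝ := fun s => if s = t then (1:ℝ) else if s = T then -η else 0 with hf2
      have hf21 : f2 = fun s => -f1 s := by
        funext s
        simp only [hf1, hf2]
        split_ifs <;> ring
      set d : Fin H → ℕ → ℝ :=
        fun h => if h = h1 then f1 else if h = h2 then f2 else fun _ => 0 with hd
      apply master r ω l β τ δ a0 u u' hu1 c a hfeas' hno d
      · intro t' ht1' ht2'
        left
        rw [show (fun s => τ*(1+r s)-δ) = A from rfl]
        have hsum : ∑ h, eS A τ (d h) t' = eS A τ (d h1) t' + eS A τ (d h2) t' := by
          apply sum_house_two h1 h2 hne12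
          intro h hh1 hh2
          have : d h = fun _ => 0 := by simp [hd, hh1, hh2]
          rw [this, eS_fun_zero]
        rw [hsum]
        have e1 : d h1 = f1 := by simp [hd]
        have e2 : d h2 = f2 := by simp [hd, hne12.symm, Ne.symm hne12]
        rw [e1, e2, hf21, eS_neg]
        simp
      · intro h
        by_cases hh1 : h = h1
        · right
          subst hh1
          have e1 : d h = f1 := by simp [hd]
          rw [e1, hf1, sum_ite_two T t T ht le_rfl htT (-1) η
            (fun s => β h ^ s * u' h (c h s))]
          have hpos : 0 < g h T * (η - r1) := mul_pos hgT1 (by linarith)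
          have hx : g h T * (η - r1) = g h T * η - g h t := by
            rw [hr1]
            field_simp
          rw [hx] at hpos
          show (0:ℝ) < g h t * (-1) + g h T * η
          linarith
        · by_cases hh2 : h = h2
          · right
            subst hh2
            have e2 : d h = f2 := by simp [hd, hh1]
            rw [e2, hf2, sum_ite_two T t T ht le_rfl htT 1 (-η)
              (fun s => β h ^ s * u' h (c h s))]
            have hpos : 0 < g h T * (r2 - η) := mul_pos hgT2 (by linarith)
            have hx : g h T * (r2 - η) = g h t - g h T * η := by
              rw [hr2]
              field_simp
            rw [hx] at hpos
            show (0:ℝ) < g h t * 1 + g h T * (-η)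
            linarith
          · left
            intro t' ht'
            simp [hd, hh1, hh2]
      · refine ⟨h1, fun hall => ?_⟩
        have := hall t ht
        simp [hd, hf1] at this
    have claim2 : ∀ h1 h2 : Fin H, ∀ t ≤ T, g h1 t * g h2 T = g h2 t * g h1 T := by
      intro h1 h2 t ht
      rcases lt_trichotomy (g h1 t * g h2 T) (g h2 t * g h1 T) with hlt | heq | hgt
      · exact absurd hlt (fun hlt => key2 h1 h2 t ht hlt)
      · exact heq
      · exact absurd hgt (fun hgt => key2 h2 h1 t ht hgt)
    -- Claim 3 : Euler inequality
    have claim3 : ∀ t, 1 ≤ t → t ≤ T → 0 ≤ g h0 (t-1) - A t * g h0 t := by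
      intro t ht1 ht2
      by_contra hD
      push_neg at hD
      set f : ℕ → ℝ := fun s => if s = t-1 then (-1:ℝ) else if s = t then A t else 0 with hf
      have hef : ∀ s, s ≤ t - 1 → eS A τ f s = 0 := by
        intro s hs
        apply eS_zero_of_lt
        intro s' hs'
        simp only [hf]
        rw [if_neg (by omega), if_neg (by omega)]
      have heft : eS A τ f t = τ := by
        have he0 : t = (t-1) + 1 := by omega
        rw [he0, eS_succ, hef (t-1) le_rfl]
        simp [hf]
      have heft1 : eS A τ f (t+1) = 0 := by
        rw [eS_succ, heft]
        have hne : ¬ (t = t - 1) := by omega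
        simp [hf, hne]
        ring
      have hefa : ∀ s, t + 1 ≤ s → eS A τ f s = 0 := by
        apply eS_zero_after A τ f heft1
        intro s hs
        simp only [hf]
        rw [if_neg (by omega), if_neg (by omega)]
      set d : Fin H → ℕ → ℝ :=
        fun h => if h = h0 then f else fun _ => 0 with hd
      apply master r ω l β τ δ a0 u u' hu1 c a hfeas' hno d
      · intro t' ht1' ht2'
        left
        rw [show (fun s => τ*(1+r s)-δ) = A from rfl]
        have hsum : ∑ h, eS A τ (d h) t' = eS A τ (d h0) t' := by
          apply sum_house_one h0
          intro h hh
          have : d h = fun _ => 0 := by simp [hd, hh]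
          rw [this, eS_fun_zero]
        rw [hsum]
        have e0 : d h0 = f := by simp [hd]
        rw [e0]
        rcases lt_trichotomy t' t with hc1 | hc2 | hc3
        · rw [hef t' (by omega)]
        · rw [hc2, heft]
          linarith
        · rw [hefa t' (by omega)]
      · intro h
        by_cases hh : h = h0
        · right
          subst hh
          have e0 : d h0 = f := by simp [hd]
          rw [e0, hf, sum_ite_two T (t-1) t (by omega) ht2 (by omega) (-1) (A t)
            (fun s => β h0 ^ s * u' h0 (c h0 s))]
          show (0:ℝ) < g h0 (t-1) * (-1) + g h0 t * (A t)
          linarith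
        · left
          intro t' ht'
          simp [hd, hh]
      · refine ⟨h0, fun hall => ?_⟩
        have := hall (t-1) (by omega)
        simp [hd, hf] at this
    -- Claim 4 : complementary slackness
    have claim4 : ∀ t, 1 ≤ t → t ≤ T → 0 < ∑ h, a h t →
        g h0 (t-1) - A t * g h0 t = 0 := by
      intro t ht1 ht2 hslack
      rcases eq_or_lt_of_le (claim3 t ht1 ht2) with heq | hD
      · exact heq.symm
      exfalso
      set f : ℕ → ℝ := fun s => if s = t-1 then (1:ℝ) else if s = t then -A t else 0 with hf
      have hef : ∀ s, s ≤ t - 1 → eS A τ f s = 0 := by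
        intro s hs
        apply eS_zero_of_lt
        intro s' hs'
        simp only [hf]
        rw [if_neg (by omega), if_neg (by omega)]
      have heft : eS A τ f t = -τ := by
        have he0 : t = (t-1) + 1 := by omega
        rw [he0, eS_succ, hef (t-1) le_rfl]
        simp [hf]
      have heft1 : eS A τ f (t+1) = 0 := by
        rw [eS_succ, heft]
        have hne : ¬ (t = t - 1) := by omega
        simp [hf, hne]
        ring
      have hefa : ∀ s, t + 1 ≤ s → eS A τ f s = 0 := by
        apply eS_zero_after A τ f heft1
        intro s hs
        simp only [hf]
        rw [if_neg (by omega), if_neg (by omega)]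
      set d : Fin H → ℕ → ℝ :=
        fun h => if h = h0 then f else fun _ => 0 with hd
      apply master r ω l β τ δ a0 u u' hu1 c a hfeas' hno d
      · intro t' ht1' ht2'
        rw [show (fun s => τ*(1+r s)-δ) = A from rfl]
        have hsum : ∑ h, eS A τ (d h) t' = eS A τ (d h0) t' := by
          apply sum_house_one h0
          intro h hh
          have : d h = fun _ => 0 := by simp [hd, hh]
          rw [this, eS_fun_zero]
        have e0 : d h0 = f := by simp [hd]
        rcases lt_trichotomy t' t with hc1 | hc2 | hc3
        · left; rw [hsum, e0, hef t' (by omega)]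
        · right; rw [hc2]; exact hslack
        · left; rw [hsum, e0, hefa t' (by omega)]
      · intro h
        by_cases hh : h = h0
        · right
          subst hh
          have e0 : d h0 = f := by simp [hd]
          rw [e0, hf, sum_ite_two T (t-1) t (by omega) ht2 (by omega) 1 (-(A t))
            (fun s => β h0 ^ s * u' h0 (c h0 s))]
          show (0:ℝ) < g h0 (t-1) * 1 + g h0 t * (-(A t))
          linarith
        · left
          intro t' ht'
          simp [hd, hh]
      · refine ⟨h0, fun hall => ?_⟩
        have := hall (t-1) (by omega)
        simp [hd, hf] at this
    -- Construct the multipliers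
    refine ⟨fun h => 1 / g h T, fun h s => g h s / (τ * g h T),
      fun t => if t = T + 1 then 1/τ else
        g h0 (t-1) / (τ * g h0 T) - g h0 t / (τ * g h0 T) * (τ * (1 + r t) - δ),
      ?_, ?_, ?_, ?_, ?_, ?_, ?_⟩
    · refine ⟨h0, ?_⟩
      have hgT : 0 < g h0 T := hgpos h0 T le_rfl
      positivity
    · intro h t ht
      dsimp only
      have hgT : 0 < g h T := hgpos h T le_rfl
      have hlink : g h t = β h ^ t * u' h (c h t) := rfl
      rw [hlink]
      have h1 : g h T ≠ 0 := ne_of_gt hgT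
      have h2 : τ ≠ 0 := ne_of_gt hτ0
      field_simp
      ring
    · intro h t ht1 ht2
      dsimp only
      rw [if_neg (by omega)]
      have hL : ∀ s, s ≤ T → g h s / (τ * g h T) = g h0 s / (τ * g h0 T) := by
        intro s hs
        have h2 := claim2 h h0 s hs
        have hgT : 0 < g h T := hgpos h T le_rfl
        have hgT0 : 0 < g h0 T := hgpos h0 T le_rfl
        rw [div_eq_div_iff (by positivity) (by positivity)]
        nlinarith [h2]
      rw [hL (t-1) (by omega), hL t ht2]
      ring
    · intro h
      dsimp only
      rw [if_pos rfl]
      have hgT : 0 < g h T := hgpos h T le_rfl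
      field_simp
      ring
    · intro t ht1 ht2
      dsimp only
      rcases Nat.lt_or_ge t (T+1) with htT | htT
      · rw [if_neg (by omega)]
        by_cases hS : ∑ h, a h t = 0
        · rw [hS, mul_zero]
        · have hS' : 0 < ∑ h, a h t := by
            have ht0 : t - 1 ≤ T := by omega
            have := hfs (t-1) ht0
            have he : t - 1 + 1 = t := by omega
            rw [he] at this
            exact lt_of_le_of_ne this (Ne.symm hS)
          have h4 := claim4 t ht1 (by omega) hS'
          have hgT0 : 0 < g h0 T := hgpos h0 T le_rfl
          have : g h0 (t-1) / (τ * g h0 T) - g h0 t / (τ * g h0 T) * (τ * (1 + r t) - δ)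
              = (g h0 (t-1) - A t * g h0 t) / (τ * g h0 T) := by
            rw [hA]
            field_simp
          rw [this, h4, zero_div, zero_mul]
      · have : t = T + 1 := by omega
        rw [this, if_pos rfl, claim1, mul_zero]
    · intro h
      dsimp only
      have hgT : 0 < g h T := hgpos h T le_rfl
      positivity
    · intro t ht1 ht2
      dsimp only
      rcases Nat.lt_or_ge t (T+1) with htT | htT
      · rw [if_neg (by omega)]
        have h3 := claim3 t ht1 (by omega)
        have hgT0 : 0 < g h0 T := hgpos h0 T le_rfl
        have heq : g h0 (t-1) / (τ * g h0 T) - g h0 t / (τ * g h0 T) * (τ * (1 + r t) - δ)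
            = (g h0 (t-1) - A t * g h0 t) / (τ * g h0 T) := by
          rw [hA]
          field_simp
        rw [heq]
        positivity
      · have : t = T + 1 := by omega
        rw [this, if_pos rfl]
        positivity
  · -- Backward direction
    rintro ⟨θ, lam, ν, ⟨h1, hθ1⟩, hI, hII, hIII, hIV, hVθ, hVν⟩
    refine ⟨hfeas', ?_⟩
    rintro ⟨c', a', ⟨hfa0', hfc', hfb', hfs'⟩, hle, hstar, hstrict⟩
    -- all θ are positive
    have hθall : ∀ h, θ h ≠ 0 := by
      intro h2 hz
      have e1 := hI h2 T le_rfl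
      rw [hz] at e1
      have e1' : lam h2 T = 0 := by
        have : τ * lam h2 T = 0 := by linarith
        exact (mul_eq_zero.mp this).resolve_left (ne_of_gt hτ0)
      have e2 := hIII h2
      have e3 : ν (T+1) = 0 := by linarith
      have e4 := hIII h1
      have e5 : lam h1 T = 0 := by linarith
      have e6 := hI h1 T le_rfl
      rw [e5] at e6
      have e7 : θ h1 * g h1 T = 0 := by
        have : g h1 T = β h1 ^ T * u' h1 (c h1 T) := rfl
        rw [this]
        linarith
      have := hgpos h1 T le_rfl
      rcases mul_eq_zero.mp e7 with h | h
      · exact hθ1 h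
      · linarith
    have hθpos : ∀ h, 0 < θ h := fun h => lt_of_le_of_ne (hVθ h) (Ne.symm (hθall h))
    -- lam is household independent
    have hLk : ∀ k, k ≤ T → ∀ h h' : Fin H, lam h (T - k) = lam h' (T - k) := by
      intro k
      induction k with
      | zero =>
        intro _ h h'
        have e1 := hIII h
        have e2 := hIII h'
        simp only [Nat.sub_zero]
        linarith
      | succ n ih =>
        intro hk h h'
        have hn : n ≤ T := by omega
        have h1' : 1 ≤ T - n := by omega
        have h2' : T - n ≤ T := by omega
        have e1 := hII h (T - n) h1' h2'
        have e2 := hII h' (T - n) h1' h2'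
        have h3 : T - n - 1 = T - (n+1) := by omega
        rw [h3] at e1 e2
        have ihh := ih hn h h'
        rw [ihh] at e1
        linarith
    have hLam : ∀ h : Fin H, ∀ t ≤ T, lam h t = lam h0 t := by
      intro h t ht
      have : t = T - (T - t) := by omega
      rw [this]
      exact hLk (T - t) (by omega) h h0
    -- utility sums
    set P : Fin H → ℝ := fun h => ∑ t ∈ Finset.range (T+1), β h ^ t * u h (c h t) with hP
    set P' : Fin H → ℝ := fun h => ∑ t ∈ Finset.range (T+1), β h ^ t * u h (c' h t) with hP'
    have hΔ : ∀ h, 0 ≤ P' h - P h := by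
      intro h
      have := hle h
      unfold Phi at this
      simp only [hP, hP']
      linarith
    have hΔs : 0 < P' hstar - P hstar := by
      unfold Phi at hstrict
      simp only [hP, hP']
      linarith
    -- concavity bound
    have key1 : ∀ h : Fin H, P' h - P h ≤
        ∑ t ∈ Finset.range (T+1), β h ^ t * u' h (c h t) * (c' h t - c h t) := by
      intro h
      have : P' h - P h = ∑ t ∈ Finset.range (T+1),
          (β h ^ t * u h (c' h t) - β h ^ t * u h (c h t)) := by
        rw [Finset.sum_sub_distrib]
      rw [this]
      apply Finset.sum_le_sum
      intro t ht
      have ht' : t ≤ T := Nat.lt_succ_iff.mp (Finset.mem_range.mp ht)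
      have hconc := concave_ineq (hu1 h) (hu2 h) (hu''neg h)
        (hfc h t ht') (hfc' h t ht')
      have hβt : (0:ℝ) ≤ β h ^ t := le_of_lt (pow_pos (hβ h).1 t)
      calc β h ^ t * u h (c' h t) - β h ^ t * u h (c h t)
          = β h ^ t * (u h (c' h t) - u h (c h t)) := by ring
        _ ≤ β h ^ t * (u' h (c h t) * (c' h t - c h t)) :=
            mul_le_mul_of_nonneg_left hconc hβt
        _ = β h ^ t * u' h (c h t) * (c' h t - c h t) := by ring
    -- multiplier substitution and telescoping
    set b : Fin H → ℕ → ℝ := fun h t => a' h t - a h t with hb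
    set B : ℕ → ℝ := fun t => ∑ h, b h t with hB
    set L : ℕ → ℝ := fun t => lam h0 t with hLdef
    have key2 : ∀ h : Fin H,
        θ h * ∑ t ∈ Finset.range (T+1), β h ^ t * u' h (c h t) * (c' h t - c h t)
        = ∑ t ∈ Finset.range (T+1), L t * (A t * b h t - b h (t+1)) := by
      intro h
      rw [Finset.mul_sum]
      apply Finset.sum_congr rfl
      intro t ht
      have ht' : t ≤ T := Nat.lt_succ_iff.mp (Finset.mem_range.mp ht)
      have e1 := hI h t ht'
      have e2 : τ * (c' h t - c h t) = A t * b h t - b h (t+1) := by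
        have hb1 := hfb h t ht'
        have hb2 := hfb' h t ht'
        simp only [hb, hA]
        rw [hb1, hb2]
        ring
      have e3 : lam h t = L t := by
        rw [hLdef]
        exact hLam h t ht'
      have e4 : τ * lam h t = θ h * (β h ^ t * u' h (c h t)) := by linarith
      calc θ h * (β h ^ t * u' h (c h t) * (c' h t - c h t))
          = (θ h * (β h ^ t * u' h (c h t))) * (c' h t - c h t) := by ring
        _ = (τ * lam h t) * (c' h t - c h t) := by rw [e4]
        _ = lam h t * (τ * (c' h t - c h t)) := by ring
        _ = L t * (A t * b h t - b h (t+1)) := by rw [e2, e3]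
    have hB0 : B 0 = 0 := by
      simp only [hB, hb]
      apply Finset.sum_eq_zero
      intro h _
      rw [hfa0 h, hfa0' h]
      ring
    have swap : ∑ h, ∑ t ∈ Finset.range (T+1), L t * (A t * b h t - b h (t+1))
        = ∑ t ∈ Finset.range (T+1), L t * (A t * B t - B (t+1)) := by
      rw [Finset.sum_comm]
      apply Finset.sum_congr rfl
      intro t _
      rw [← Finset.mul_sum]
      congr 1
      rw [Finset.sum_sub_distrib, ← Finset.mul_sum]
    -- telescoping identity
    have tele : ∑ t ∈ Finset.range (T+1), L t * (A t * B t - B (t+1))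
        = -∑ t ∈ Finset.range (T+1), ν (t+1) * B (t+1) := by
      have expand : ∑ t ∈ Finset.range (T+1), L t * (A t * B t - B (t+1))
          = ∑ t ∈ Finset.range (T+1), L t * (A t * B t)
            - ∑ t ∈ Finset.range (T+1), L t * B (t+1) := by
        rw [← Finset.sum_sub_distrib]
        apply Finset.sum_congr rfl
        intro t _
        ring
      have s1 : ∑ t ∈ Finset.range (T+1), L t * (A t * B t)
          = ∑ t ∈ Finset.range T, L (t+1) * (A (t+1) * B (t+1)) := by
        rw [Finset.sum_range_succ']
        rw [hB0]
        simp
      have s2 : ∑ t ∈ Finset.range (T+1), L t * B (t+1)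
          = ∑ t ∈ Finset.range T, L t * B (t+1) + L T * B (T+1) :=
        Finset.sum_range_succ _ T
      have s3 : ∑ t ∈ Finset.range (T+1), ν (t+1) * B (t+1)
          = ∑ t ∈ Finset.range T, ν (t+1) * B (t+1) + ν (T+1) * B (T+1) :=
        Finset.sum_range_succ _ T
      have hmid : ∑ t ∈ Finset.range T, (L (t+1) * (A (t+1) * B (t+1))
          - L t * B (t+1) + ν (t+1) * B (t+1)) = 0 := by
        apply Finset.sum_eq_zero
        intro t ht
        have htT : t < T := Finset.mem_range.mp ht
        have e := hII h0 (t+1) (by omega) (by omega)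
        have he1 : t + 1 - 1 = t := by omega
        rw [he1] at e
        have hAe : A (t+1) = τ * (1 + r (t+1)) - δ := rfl
        have eL : -ν (t+1) + L t - L (t+1) * A (t+1) = 0 := by
          simp only [hLdef, hAe]
          exact e
        linear_combination (-B (t+1)) * eL
      have hend : L T - ν (T+1) = 0 := hIII h0
      have hmid' : ∑ t ∈ Finset.range T, (L (t+1) * (A (t+1) * B (t+1))
          - L t * B (t+1) + ν (t+1) * B (t+1))
          = ∑ t ∈ Finset.range T, L (t+1) * (A (t+1) * B (t+1))
            - ∑ t ∈ Finset.range T, L t * B (t+1)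
            + ∑ t ∈ Finset.range T, ν (t+1) * B (t+1) := by
        rw [Finset.sum_add_distrib, Finset.sum_sub_distrib]
      rw [expand, s1, s2, s3]
      rw [hmid'] at hmid
      linear_combination hmid - B (T+1) * hend
    -- sign of the telescoped terms
    have hsign : 0 ≤ ∑ t ∈ Finset.range (T+1), ν (t+1) * B (t+1) := by
      apply Finset.sum_nonneg
      intro t ht
      have ht' : t ≤ T := Nat.lt_succ_iff.mp (Finset.mem_range.mp ht)
      have hν : 0 ≤ ν (t+1) := hVν (t+1) (by omega) (by omega)
      have hIVt := hIV (t+1) (by omega) (by omega)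
      have hBt : B (t+1) = ∑ h, a' h (t+1) - ∑ h, a h (t+1) := by
        simp only [hB, hb]
        rw [Finset.sum_sub_distrib]
      have ha'n : 0 ≤ ∑ h, a' h (t+1) := hfs' t ht'
      have : ν (t+1) * B (t+1) = ν (t+1) * ∑ h, a' h (t+1) := by
        rw [hBt]
        linear_combination -hIVt
      rw [this]
      exact mul_nonneg hν ha'n
    -- strict positivity of the weighted improvement
    have hpos : 0 < ∑ h, θ h * (P' h - P h) := by
      apply Finset.sum_pos'
      · intro h _
        exact mul_nonneg (hVθ h) (hΔ h)
      · exact ⟨hstar, Finset.mem_univ _, mul_pos (hθpos hstar) hΔs⟩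
    -- the chain of inequalities
    have hchain : ∑ h, θ h * (P' h - P h)
        ≤ ∑ t ∈ Finset.range (T+1), L t * (A t * B t - B (t+1)) := by
      rw [← swap]
      apply Finset.sum_le_sum
      intro h _
      rw [← key2 h]
      exact mul_le_mul_of_nonneg_left (key1 h) (hVθ h)
    rw [tele] at hchain
    linarith
end

section
/- If multipliers λ = (λ_t^h)_{t=0,…,T; h=1,…,H} ∈ ℝ^{H(T+1)} and ν = (ν_1,…,ν_{T+1}) ∈ ℝ^{T+1} satisfy conditions (II) −ν_t + λ_{t−1}^h − λ_t^h(τ(1+r_t) − δ) = 0 for t = 1,…,T and h = 1,…,H, and (III) λ_T^h − ν_{T+1} = 0 for h = 1,…,H, then the multipliers λ_t^h are independent of the household: λ_t^h = λ_t^{h'} for all t = 0,…,T and all h, h' ∈ {1,…,H}. -/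
/-- if multipliers `λ` and `ν` satisfy conditions (II) and (III) of
the first order conditions of the generalized Ramsey model with default, then the
multipliers `λ_t^h` are independent of the household. -/
theorem lambda_household_independent (H T : ℕ) (hH : 1 ≤ H)
    (r : ℕ → ℝ) (τ δ : ℝ)
    (hr : ∀ t ≤ T, 0 < r t) (hτ : 1 ≤ τ) (hδ0 : 0 < δ) (hδ1 : δ < 1)
    (lam : Fin H → ℕ → ℝ) (ν : ℕ → ℝ)
    -- (II)
    (hII : ∀ h : Fin H, ∀ t, 1 ≤ t → t ≤ T →
      -ν t + lam h (t - 1) - lam h t * (τ * (1 + r t) - δ) = 0)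
    -- (III)
    (hIII : ∀ h : Fin H, lam h T - ν (T + 1) = 0) :
    ∀ t ≤ T, ∀ h h' : Fin H, lam h t = lam h' t := by
  have key : ∀ d t, t + d = T → ∀ h h' : Fin H, lam h t = lam h' t := by
    intro d
    induction d with
    | zero =>
      intro t ht h h'
      simp at ht
      subst ht
      have := hIII h; have := hIII h'
      linarith
    | succ d ih =>
      intro t ht h h'
      have h1 : (t + 1) + d = T := by omega
      have heq := ih (t + 1) h1 h h'
      have e1 := hII h (t + 1) (by omega) (by omega)
      have e2 := hII h' (t + 1) (by omega) (by omega)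
      simp only [Nat.add_sub_cancel] at e1 e2
      rw [heq] at e1; linarith
  intro t ht h h'
  exact key (T - t) t (by omega) h h'
end

section
/- Suppose θ ∈ ℝ^H with θ_h ≥ 0 for all h and at least one θ_h ≠ 0, λ = (λ_t^h) ∈ ℝ^{H(T+1)} and ν = (ν_1,…,ν_{T+1}) ∈ ℝ^{T+1}, together with positive consumptions c̄_t^h > 0, satisfy conditions (I) −θ_h (β^h)^t (u^h)'(c̄_t^h) + τ λ_t^h = 0 for t = 0,…,T and h = 1,…,H, (II) −ν_t + λ_{t−1}^h − λ_t^h(τ(1+r_t) − δ) = 0 for t = 1,…,T and h = 1,…,H, and (III) λ_T^h − ν_{T+1} = 0 for h = 1,…,H. Then θ_h > 0 for every household h = 1,…,H. -/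
/-- if multipliers `θ ≥ 0` (not all zero), `λ` and `ν`, together
with positive consumptions, satisfy conditions (I), (II) and (III) of the first
order conditions of the generalized Ramsey model with default, then `θ_h > 0`
for every household. -/
theorem theta_positive (H T : ℕ) (hH : 1 ≤ H)
    (r : ℕ → ℝ) (β : Fin H → ℝ) (τ δ : ℝ)
    (hr : ∀ t ≤ T, 0 < r t) (hβ : ∀ h, 0 < β h ∧ β h < 1)
    (hτ : 1 ≤ τ) (hδ0 : 0 < δ) (hδ1 : δ < 1)
    (u u' u'' : Fin H → ℝ → ℝ)
    (hu1 : ∀ h : Fin H, ∀ x > (0:ℝ), HasDerivAt (u h) (u' h x) x)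
    (hu2 : ∀ h : Fin H, ∀ x > (0:ℝ), HasDerivAt (u' h) (u'' h x) x)
    (hu2c : ∀ h : Fin H, ContinuousOn (u'' h) (Set.Ioi 0))
    (hu'pos : ∀ h : Fin H, ∀ x > (0:ℝ), 0 < u' h x)
    (hu''neg : ∀ h : Fin H, ∀ x > (0:ℝ), u'' h x < 0)
    (hu'top : ∀ h : Fin H, Filter.Tendsto (u' h) Filter.atTop (nhds 0))
    (hu'zero : ∀ h : Fin H,
      Filter.Tendsto (u' h) (nhdsWithin 0 (Set.Ioi 0)) Filter.atTop)
    (θ : Fin H → ℝ) (lam : Fin H → ℕ → ℝ) (ν : ℕ → ℝ)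
    (cbar : Fin H → ℕ → ℝ) (hc : ∀ h : Fin H, ∀ t ≤ T, 0 < cbar h t)
    (hθ0 : ∀ h : Fin H, 0 ≤ θ h) (hθne : ∃ h : Fin H, θ h ≠ 0)
    -- (I)
    (hI : ∀ h : Fin H, ∀ t ≤ T,
      -θ h * β h ^ t * u' h (cbar h t) + τ * lam h t = 0)
    -- (II)
    (hII : ∀ h : Fin H, ∀ t, 1 ≤ t → t ≤ T →
      -ν t + lam h (t - 1) - lam h t * (τ * (1 + r t) - δ) = 0)
    -- (III)
    (hIII : ∀ h : Fin H, lam h T - ν (T + 1) = 0) :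
    ∀ h : Fin H, 0 < θ h := by
  obtain ⟨g, hg⟩ := hθne
  have hτ0 : 0 < τ := lt_of_lt_of_le one_pos hτ
  intro h
  have hcT : ∀ h' : Fin H, 0 < cbar h' T := fun h' => hc h' T le_rfl
  have hlam : ∀ h' : Fin H, τ * lam h' T = θ h' * β h' ^ T * u' h' (cbar h' T) := by
    intro h'
    have := hI h' T le_rfl
    linarith
  have heq : lam h T = lam g T := by
    have h1 := hIII h; have h2 := hIII g; linarith
  have hgpos : 0 < θ g := lt_of_le_of_ne (hθ0 g) (Ne.symm hg)
  have hβg : 0 < β g ^ T := pow_pos (hβ g).1 T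
  have hug : 0 < u' g (cbar g T) := hu'pos g _ (hcT g)
  have hlg : 0 < lam g T := by
    by_contra hle
    push_neg at hle
    have h1 : τ * lam g T ≤ 0 := mul_nonpos_of_nonneg_of_nonpos hτ0.le hle
    have h2 : 0 < θ g * β g ^ T * u' g (cbar g T) := mul_pos (mul_pos hgpos hβg) hug
    linarith [hlam g]
  have hkey : 0 < θ h * β h ^ T * u' h (cbar h T) := by
    have hh := hlam h
    rw [heq] at hh
    rw [← hh]
    exact mul_pos hτ0 hlg
  by_contra hle
  push_neg at hle
  have hθh : θ h = 0 := le_antisymm hle (hθ0 h)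
  rw [hθh] at hkey
  simp at hkey
end

section
/- At every Pareto optimal solution z̄ = ((c̄_t^h),(ā_t^h)) of the generalized Ramsey model with default, the aggregate capital stock at the final time vanishes: Σ_{h=1}^H ā_{T+1}^h = 0. -/
/-- at every Pareto optimal solution the aggregate capital stock
at the final time vanishes: `Σ_h ā_{T+1}^h = 0`. -/
theorem final_aggregate_capital_zero (H T : ℕ) (hH : 1 ≤ H)
    (r ω : ℕ → ℝ) (l β : Fin H → ℝ) (τ δ : ℝ) (a0 : Fin H → ℝ)
    (hr : ∀ t ≤ T, 0 < r t) (hω : ∀ t ≤ T, 1 ≤ ω t)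
    (hl : ∀ h, 0 < l h) (hβ : ∀ h, 0 < β h ∧ β h < 1)
    (hτ : 1 ≤ τ) (hδ0 : 0 < δ) (hδ1 : δ < 1)
    (ha0 : 0 < ∑ h, a0 h)
    (u u' u'' : Fin H → ℝ → ℝ)
    (hu1 : ∀ h : Fin H, ∀ x > (0:ℝ), HasDerivAt (u h) (u' h x) x)
    (hu2 : ∀ h : Fin H, ∀ x > (0:ℝ), HasDerivAt (u' h) (u'' h x) x)
    (hu2c : ∀ h : Fin H, ContinuousOn (u'' h) (Set.Ioi 0))
    (hu'pos : ∀ h : Fin H, ∀ x > (0:ℝ), 0 < u' h x)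
    (hu''neg : ∀ h : Fin H, ∀ x > (0:ℝ), u'' h x < 0)
    (hu'top : ∀ h : Fin H, Filter.Tendsto (u' h) Filter.atTop (nhds 0))
    (hu'zero : ∀ h : Fin H,
      Filter.Tendsto (u' h) (nhdsWithin 0 (Set.Ioi 0)) Filter.atTop)
    (c a : Fin H → ℕ → ℝ) (hpareto : Pareto H T r ω l β τ δ a0 u c a) :
    ∑ h, a h (T + 1) = 0 := by
  obtain ⟨⟨ha_init, hcpos, hbudget, hagg⟩, hnot⟩ := hpareto
  by_contra hne
  have hS : 0 < ∑ h, a h (T + 1) := lt_of_le_of_ne (hagg T le_rfl) (Ne.symm hne)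
  set S := ∑ h, a h (T + 1) with hSdef
  have hτ0 : 0 < τ := lt_of_lt_of_le one_pos hτ
  have hSτ : 0 < S / τ := div_pos hS hτ0
  set h0 : Fin H := ⟨0, hH⟩ with hh0
  set c' : Fin H → ℕ → ℝ := fun h t => if h = h0 ∧ t = T then c h t + S / τ else c h t with hc'
  set a' : Fin H → ℕ → ℝ := fun h t => if h = h0 ∧ t = T + 1 then a h t - S else a h t with ha'
  have hc'eq : ∀ (h : Fin H) (t : ℕ), ¬(h = h0 ∧ t = T) → c' h t = c h t := by
    intro h t hcond; simp only [hc']; rw [if_neg hcond]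
  have hc'T : c' h0 T = c h0 T + S / τ := by
    simp [hc']
  have ha'eq : ∀ (h : Fin H) (t : ℕ), ¬(h = h0 ∧ t = T + 1) → a' h t = a h t := by
    intro h t hcond; simp only [ha']; rw [if_neg hcond]
  have ha'T : a' h0 (T + 1) = a h0 (T + 1) - S := by
    simp [ha']
  have hmono : StrictMonoOn (u h0) (Set.Ioi 0) := by
    apply strictMonoOn_of_deriv_pos (convex_Ioi 0)
    · exact fun x hx => (hu1 h0 x hx).differentiableAt.continuousAt.continuousWithinAt
    · intro x hx
      rw [interior_Ioi] at hx
      rw [(hu1 h0 x hx).deriv]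
      exact hu'pos h0 x hx
  have hkey : ∀ h : Fin H, u h0 (c h0 T) < u h0 (c h0 T + S / τ) := by
    intro _
    have hc := hcpos h0 T le_rfl
    exact hmono (Set.mem_Ioi.mpr hc) (Set.mem_Ioi.mpr (by linarith)) (by linarith)
  have hPhi_lt : Phi T β u c' h0 < Phi T β u c h0 := by
    unfold Phi
    rw [neg_lt_neg_iff]
    apply Finset.sum_lt_sum
    · intro t _
      by_cases htT : t = T
      · subst htT
        rw [hc'T]
        exact mul_le_mul_of_nonneg_left (le_of_lt (hkey h0)) (le_of_lt (pow_pos (hβ h0).1 t))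
      · rw [hc'eq h0 t (fun hp => htT hp.2)]
    · exact ⟨T, Finset.mem_range.mpr (by omega), by
        rw [hc'T]
        exact mul_lt_mul_of_pos_left (hkey h0) (pow_pos (hβ h0).1 T)⟩
  apply hnot
  refine ⟨c', a', ⟨?_, ?_, ?_, ?_⟩, ?_, ⟨h0, hPhi_lt⟩⟩
  · intro h
    rw [ha'eq h 0 (by rintro ⟨_, ht⟩; omega)]
    exact ha_init h
  · intro h t ht
    by_cases hcase : h = h0 ∧ t = T
    · obtain ⟨hh, htT⟩ := hcase
      rw [hh, htT, hc'T]
      have := hcpos h0 T le_rfl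
      linarith
    · rw [hc'eq h t hcase]; exact hcpos h t ht
  · intro h t ht
    rw [ha'eq h t (by rintro ⟨_, h2⟩; omega)]
    by_cases hcase : h = h0 ∧ t = T
    · obtain ⟨hh, htT⟩ := hcase
      subst htT
      rw [hh, ha'T, hc'T, hbudget h0 t ht]
      have hτS : τ * (S / τ) = S := mul_div_cancel₀ S (ne_of_gt hτ0)
      ring_nf
      ring_nf at hτS
      linarith
    · rw [ha'eq h (t + 1) (by rintro ⟨h1, h2⟩; exact hcase ⟨h1, by omega⟩),
        hc'eq h t hcase]
      exact hbudget h t ht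
  · intro t ht
    by_cases htT : t = T
    · subst htT
      have heach : ∀ h : Fin H, a' h (t + 1) = a h (t + 1) - (if h = h0 then S else 0) := by
        intro h
        by_cases hh : h = h0
        · rw [hh, ha'T, if_pos rfl]
        · rw [ha'eq h (t + 1) (fun hp => hh hp.1), if_neg hh]; ring
      rw [Finset.sum_congr rfl (fun h _ => heach h), Finset.sum_sub_distrib,
        Finset.sum_ite_eq' Finset.univ h0 (fun _ => S)]
      simp [← hSdef]
    · rw [Finset.sum_congr rfl
        (fun h _ => ha'eq h (t + 1) (by rintro ⟨_, h2⟩; exact htT (by omega)))]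
      exact hagg t ht
  · intro h
    by_cases hh : h = h0
    · rw [hh]; exact le_of_lt hPhi_lt
    · unfold Phi
      have : ∀ t, c' h t = c h t := fun t => hc'eq h t (fun hp => hh hp.1)
      simp only [this]
      exact le_rfl
end

section
/- Let z̄ = ((c̄_t^h),(ā_t^h)) be a Pareto optimal solution of the generalized Ramsey model with default. Then there exist multipliers θ = (θ_1,…,θ_H) with θ_h > 0 for all h and ν = (ν_1,…,ν_{T+1}) with ν_t ≥ 0 for all t such that, defining λ_T := ν_{T+1} and recursively backwards λ_{t−1} := λ_t(τ(1+r_t) − δ) + ν_t for t = T, T−1,…,1, the optimal consumption satisfies (u^h)'(c̄_t^h) = τ λ_t / ((β^h)^t θ_h) for all h = 1,…,H and t = 0,…,T; the optimal capital stocks satisfy the forward recursion ā_{t+1}^h = τ ω_t l^h + (τ(1+r_t) − δ) ā_t^h − τ c̄_t^h for t = 0,…,T; the complementary slackness conditions ν_t Σ_{h=1}^H ā_t^h = 0 hold for t = 1,…,T; and Σ_{h=1}^H ā_{T+1}^h = 0. -/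
open Filter

lemma deriv_pos_eventually {g : ℝ → ℝ} {D : ℝ} (hg : HasDerivAt g D 0) (hD : 0 < D) :
    ∀ᶠ ε in nhdsWithin 0 (Set.Ioi 0), g 0 < g ε := by
  have hs := hasDerivAt_iff_tendsto_slope.mp hg
  have h1 : ∀ᶠ ε in nhdsWithin (0:ℝ) {0}ᶜ, 0 < slope g 0 ε :=
    hs.eventually (eventually_gt_nhds hD)
  have h2 : ∀ᶠ ε in nhdsWithin (0:ℝ) (Set.Ioi 0), 0 < slope g 0 ε :=
    nhdsWithin_mono 0 (by intro x hx; simpa using (ne_of_gt hx)) h1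
  filter_upwards [h2, self_mem_nhdsWithin] with ε hε hε0
  have h3 : (0:ℝ) < ε := hε0
  have h4 : 0 < ε⁻¹ * (g ε - g 0) := by simpa [slope, sub_zero, div_eq_inv_mul] using hε
  nlinarith [inv_pos.mpr h3]

lemma deriv_sum_pert (T : ℕ) (β : ℝ) (u u' : ℝ → ℝ) (c v : ℕ → ℝ)
    (hc : ∀ t ≤ T, 0 < c t) (hu1 : ∀ x > (0:ℝ), HasDerivAt u (u' x) x) :
    HasDerivAt (fun ε => ∑ t ∈ Finset.range (T+1), β ^ t * u (c t + ε * v t))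
      (∑ t ∈ Finset.range (T+1), β ^ t * (u' (c t) * v t)) 0 := by
  apply HasDerivAt.fun_sum
  intro t ht
  have hct : 0 < c t := hc t (Nat.lt_succ_iff.mp (Finset.mem_range.mp ht))
  have hinner : HasDerivAt (fun ε : ℝ => c t + ε * v t) (v t) 0 := by
    simpa using ((hasDerivAt_id (0:ℝ)).mul_const (v t)).const_add (c t)
  have houter : HasDerivAt u (u' (c t + 0 * v t)) (c t + 0 * v t) := by
    simpa using hu1 _ hct
  have := HasDerivAt.comp 0 houter hinner
  simpa [mul_comm] using this.const_mul (β ^ t)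

/-- eventual positivity of perturbed consumption for one household -/
lemma ev_cpos (T : ℕ) (c v : ℕ → ℝ) (hc : ∀ t ≤ T, 0 < c t) :
    ∀ᶠ ε in nhdsWithin (0:ℝ) (Set.Ioi 0), ∀ t ≤ T, 0 < c t + ε * v t := by
  have : ∀ᶠ ε in nhdsWithin (0:ℝ) (Set.Ioi 0), ∀ t ∈ Finset.range (T+1), 0 < c t + ε * v t := by
    refine (Filter.eventually_all_finset _).mpr (fun t ht => ?_)
    have hct : 0 < c t := hc t (Nat.lt_succ_iff.mp (Finset.mem_range.mp ht))
    have hcont : Tendsto (fun ε : ℝ => c t + ε * v t) (nhds 0) (nhds (c t)) := by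
      have : Continuous (fun ε : ℝ => c t + ε * v t) := by continuity
      simpa using this.tendsto 0
    exact nhdsWithin_le_nhds (hcont.eventually (eventually_gt_nhds hct))
  filter_upwards [this] with ε hε t ht using hε t (Finset.mem_range.mpr (Nat.lt_succ_of_le ht))

lemma master1 (H T : ℕ) (r ω : ℕ → ℝ) (l β : Fin H → ℝ) (τ δ : ℝ) (a0 : Fin H → ℝ)
    (u u' : Fin H → ℝ → ℝ) (c a : Fin H → ℕ → ℝ)
    (hτ : 0 < τ)
    (hu1 : ∀ h : Fin H, ∀ x > (0:ℝ), HasDerivAt (u h) (u' h x) x)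
    (hp : Pareto H T r ω l β τ δ a0 u c a)
    (h0 : Fin H) (v E : ℕ → ℝ)
    (hE0 : E 0 = 0)
    (hErec : ∀ s ≤ T, E (s+1) = (τ*(1+r s) - δ) * E s - v s)
    (hSC : ∀ s, 1 ≤ s → s ≤ T+1 → 0 ≤ E s ∨ 0 < ∑ h, a h s) :
    ∑ t ∈ Finset.range (T+1), β h0 ^ t * (u' h0 (c h0 t) * v t) ≤ 0 := by
  by_contra hDle
  push_neg at hDle
  obtain ⟨⟨ha0', hcpos, hrec, hsum⟩, hopt⟩ := hp
  set F := nhdsWithin (0:ℝ) (Set.Ioi 0) with hF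
  -- eventual strict utility gain
  have hg : ∀ᶠ ε in F, ∑ t ∈ Finset.range (T+1), β h0 ^ t * u h0 (c h0 t) <
      ∑ t ∈ Finset.range (T+1), β h0 ^ t * u h0 (c h0 t + ε * v t) := by
    have := deriv_pos_eventually
      (deriv_sum_pert T (β h0) (u h0) (u' h0) (c h0) v (hcpos h0) (hu1 h0)) hDle
    simpa using this
  -- eventual positivity
  have hcp := ev_cpos T (c h0) v (hcpos h0)
  -- eventual sum nonnegativity
  have hsump : ∀ᶠ ε in F, ∀ s ∈ Finset.Icc 1 (T+1), 0 ≤ (∑ h, a h s) + τ * ε * E s := by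
    refine (Filter.eventually_all_finset _).mpr (fun s hs => ?_)
    obtain ⟨hs1, hs2⟩ := Finset.mem_Icc.mp hs
    rcases hSC s hs1 hs2 with hE | hpos
    · have hss : 0 ≤ ∑ h, a h s := by
        cases s with
        | zero => omega
        | succ t => exact hsum t (by omega)
      filter_upwards [self_mem_nhdsWithin] with ε hε
      have hε' : (0:ℝ) < ε := hε
      nlinarith [mul_nonneg (mul_nonneg hτ.le hε'.le) hE]
    · have hcont : Tendsto (fun ε : ℝ => (∑ h, a h s) + τ * ε * E s) (nhds 0)
        (nhds (∑ h, a h s)) := by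
        have : Continuous (fun ε : ℝ => (∑ h, a h s) + τ * ε * E s) := by continuity
        simpa using this.tendsto 0
      exact nhdsWithin_le_nhds
        ((hcont.eventually (eventually_gt_nhds hpos)).mono fun x hx => le_of_lt hx)
  obtain ⟨ε, hgε, hcpε, hsumε⟩ := (hg.and (hcp.and hsump)).exists
  apply hopt
  refine ⟨fun h t => c h t + (if h = h0 then ε * v t else 0),
          fun h t => a h t + (if h = h0 then τ * ε * E t else 0), ?_, ?_, ?_⟩
  · refine ⟨?_, ?_, ?_, ?_⟩
    · intro h
      by_cases hh : h = h0
      · subst hh; simp [hE0, ha0']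
      · simp [hh, ha0']
    · intro h t ht
      by_cases hh : h = h0
      · simpa [hh] using hcpε t ht
      · simpa [hh] using hcpos h t ht
    · intro h t ht
      by_cases hh : h = h0
      · simp only [hh, if_pos]
        rw [hrec h0 t ht, hErec t ht]; ring
      · simp [hh, hrec h t ht]
    · intro t ht
      have : ∑ h, (a h (t+1) + (if h = h0 then τ * ε * E (t+1) else 0)) =
          (∑ h, a h (t+1)) + τ * ε * E (t+1) := by
        rw [Finset.sum_add_distrib, Finset.sum_ite_eq' Finset.univ h0]
        simp
      rw [this]
      exact hsumε (t+1) (Finset.mem_Icc.mpr ⟨by omega, by omega⟩)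
  · intro h
    by_cases hh : h = h0
    · subst hh
      simp only [Phi, if_pos, neg_le_neg_iff]
      exact le_of_lt hgε
    · simp [Phi, hh]
  · refine ⟨h0, ?_⟩
    simp only [Phi, if_pos, neg_lt_neg_iff]
    exact hgε

lemma master2 (H T : ℕ) (r ω : ℕ → ℝ) (l β : Fin H → ℝ) (τ δ : ℝ) (a0 : Fin H → ℝ)
    (u u' : Fin H → ℝ → ℝ) (c a : Fin H → ℕ → ℝ)
    (hu1 : ∀ h : Fin H, ∀ x > (0:ℝ), HasDerivAt (u h) (u' h x) x)
    (hp : Pareto H T r ω l β τ δ a0 u c a)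
    (h1 h2 : Fin H) (hne : h1 ≠ h2) (v E : ℕ → ℝ)
    (hE0 : E 0 = 0)
    (hErec : ∀ s ≤ T, E (s+1) = (τ*(1+r s) - δ) * E s - v s)
    (hD1 : 0 < ∑ t ∈ Finset.range (T+1), β h1 ^ t * (u' h1 (c h1 t) * v t))
    (hD2 : ∑ t ∈ Finset.range (T+1), β h2 ^ t * (u' h2 (c h2 t) * v t) < 0) : False := by
  obtain ⟨⟨ha0', hcpos, hrec, hsum⟩, hopt⟩ := hp
  set F := nhdsWithin (0:ℝ) (Set.Ioi 0) with hF
  have hg1 : ∀ᶠ ε in F, ∑ t ∈ Finset.range (T+1), β h1 ^ t * u h1 (c h1 t) <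
      ∑ t ∈ Finset.range (T+1), β h1 ^ t * u h1 (c h1 t + ε * v t) := by
    have := deriv_pos_eventually
      (deriv_sum_pert T (β h1) (u h1) (u' h1) (c h1) v (hcpos h1) (hu1 h1)) hD1
    simpa using this
  have hg2 : ∀ᶠ ε in F, ∑ t ∈ Finset.range (T+1), β h2 ^ t * u h2 (c h2 t) <
      ∑ t ∈ Finset.range (T+1), β h2 ^ t * u h2 (c h2 t + ε * (-v t)) := by
    have hD2' : 0 < ∑ t ∈ Finset.range (T+1), β h2 ^ t * (u' h2 (c h2 t) * (-v t)) := by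
      have : ∑ t ∈ Finset.range (T+1), β h2 ^ t * (u' h2 (c h2 t) * (-v t)) =
          -∑ t ∈ Finset.range (T+1), β h2 ^ t * (u' h2 (c h2 t) * v t) := by
        rw [← Finset.sum_neg_distrib]; exact Finset.sum_congr rfl (fun _ _ => by ring)
      rw [this]; linarith
    have := deriv_pos_eventually
      (deriv_sum_pert T (β h2) (u h2) (u' h2) (c h2) (fun t => -v t) (hcpos h2) (hu1 h2)) hD2'
    simpa using this
  have hcp1 := ev_cpos T (c h1) v (hcpos h1)
  have hcp2 := ev_cpos T (c h2) (fun t => -v t) (hcpos h2)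
  obtain ⟨ε, hg1ε, hg2ε, hcp1ε, hcp2ε⟩ := (hg1.and (hg2.and (hcp1.and hcp2))).exists
  apply hopt
  refine ⟨fun h t => c h t + ((if h = h1 then ε * v t else 0) - (if h = h2 then ε * v t else 0)),
          fun h t => a h t + ((if h = h1 then τ * ε * E t else 0) - (if h = h2 then τ * ε * E t else 0)),
          ⟨?_, ?_, ?_, ?_⟩, ?_, ?_⟩
  · intro h
    by_cases hh1 : h = h1
    · subst hh1; simp [hne, hE0, ha0']
    · by_cases hh2 : h = h2
      · subst hh2; simp [hh1, hE0, ha0']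
      · simp [hh1, hh2, ha0']
  · intro h t ht
    by_cases hh1 : h = h1
    · subst hh1
      have := hcp1ε t ht
      simp [hne]; linarith
    · by_cases hh2 : h = h2
      · subst hh2
        have := hcp2ε t ht
        simp [hh1]; simp at this; linarith
      · simpa [hh1, hh2] using hcpos h t ht
  · intro h t ht
    by_cases hh1 : h = h1
    · subst hh1
      simp only [if_pos, if_neg hne]
      rw [hrec h t ht, hErec t ht]; ring
    · by_cases hh2 : h = h2
      · subst hh2
        simp only [if_pos, if_neg hh1]
        rw [hrec h t ht, hErec t ht]; ring
      · simp [hh1, hh2, hrec h t ht]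
  · intro t ht
    have : ∑ h, (a h (t+1) + ((if h = h1 then τ * ε * E (t+1) else 0)
        - (if h = h2 then τ * ε * E (t+1) else 0))) = ∑ h, a h (t+1) := by
      rw [Finset.sum_add_distrib, Finset.sum_sub_distrib,
        Finset.sum_ite_eq' Finset.univ h1, Finset.sum_ite_eq' Finset.univ h2]
      simp
    rw [this]
    exact hsum t ht
  · intro h
    by_cases hh1 : h = h1
    · subst hh1
      simp only [Phi, if_pos, if_neg hne, neg_le_neg_iff]
      have : ∀ t, c h t + (ε * v t - 0) = c h t + ε * v t := fun t => by ring
      simp only [this]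
      exact le_of_lt hg1ε
    · by_cases hh2 : h = h2
      · subst hh2
        simp only [Phi, if_pos, if_neg hh1, neg_le_neg_iff]
        have : ∀ t, c h t + (0 - ε * v t) = c h t + ε * (-v t) := fun t => by ring
        simp only [this]
        exact le_of_lt hg2ε
      · simp [Phi, hh1, hh2]
  · refine ⟨h1, ?_⟩
    simp only [Phi, if_pos, if_neg hne, neg_lt_neg_iff]
    have : ∀ t, c h1 t + (ε * v t - 0) = c h1 t + ε * v t := fun t => by ring
    simp only [this]
    exact hg1ε

lemma sum_spike (T t0 : ℕ) (ht0 : t0 < T+1) (f : ℕ → ℝ) (w : ℝ) :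
    ∑ t ∈ Finset.range (T+1), f t * (if t = t0 then w else 0) = f t0 * w := by
  rw [Finset.sum_congr rfl (fun t _ => show f t * (if t = t0 then w else 0) =
    if t = t0 then f t * w else 0 by split_ifs <;> simp)]
  rw [Finset.sum_ite_eq' (Finset.range (T+1)) t0 (fun t => f t * w)]
  simp [Finset.mem_range.mpr ht0]

lemma sum_spike2 (T t0 t1 : ℕ) (h0 : t0 < T+1) (h1 : t1 < T+1) (f : ℕ → ℝ) (w0 w1 : ℝ) :
    ∑ t ∈ Finset.range (T+1), f t * ((if t = t0 then w0 else 0) + (if t = t1 then w1 else 0))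
      = f t0 * w0 + f t1 * w1 := by
  simp_rw [mul_add]
  rw [Finset.sum_add_distrib, sum_spike T t0 h0, sum_spike T t1 h1]

section facts
variable (H T : ℕ) (r ω : ℕ → ℝ) (l β : Fin H → ℝ) (τ δ : ℝ) (a0 : Fin H → ℝ)
  (u u' : Fin H → ℝ → ℝ) (c a : Fin H → ℕ → ℝ)

/-- Terminal condition: no aggregate capital is left over. -/
lemma factA (hτ : 0 < τ) (hH : 1 ≤ H) (hβ : ∀ h, 0 < β h)
    (hu1 : ∀ h : Fin H, ∀ x > (0:ℝ), HasDerivAt (u h) (u' h x) x)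
    (hu'pos : ∀ h : Fin H, ∀ x > (0:ℝ), 0 < u' h x)
    (hp : Pareto H T r ω l β τ δ a0 u c a) :
    ∑ h, a h (T+1) = 0 := by
  have hsum := hp.1.2.2.2 T le_rfl
  rcases eq_or_lt_of_le hsum with h | hpos
  · exact h.symm
  exfalso
  set h0 : Fin H := ⟨0, hH⟩
  have key := master1 H T r ω l β τ δ a0 u u' c a hτ hu1 hp h0
    (fun s => if s = T then 1 else 0) (fun s => if s = T+1 then -1 else 0)
    (by simp)
    (by
      intro s hs
      by_cases hsT : s = T
      · subst hsT
        simp [show s ≠ s + 1 by omega]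
      · have h1 : s + 1 ≠ T + 1 := by omega
        have h2 : s ≠ T + 1 := by omega
        simp [h1, h2, hsT])
    (by
      intro s hs1 hs2
      by_cases hsT : s = T + 1
      · right; rw [hsT]; exact hpos
      · left; simp [hsT])
  simp only [← mul_assoc] at key
  rw [sum_spike T T (by omega)] at key
  have hc : 0 < c h0 T := hp.1.2.1 h0 T le_rfl
  nlinarith [hu'pos h0 _ hc, pow_pos (hβ h0) T]

/-- Euler inequality (savings direction). -/
lemma fact2a (hτ : 0 < τ)
    (hu1 : ∀ h : Fin H, ∀ x > (0:ℝ), HasDerivAt (u h) (u' h x) x)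
    (hp : Pareto H T r ω l β τ δ a0 u c a)
    (h : Fin H) (s : ℕ) (hs : s + 1 ≤ T) :
    (τ*(1+r (s+1)) - δ) * (β h ^ (s+1) * u' h (c h (s+1))) ≤ β h ^ s * u' h (c h s) := by
  have key := master1 H T r ω l β τ δ a0 u u' c a hτ hu1 hp h
    (fun x => (if x = s then (-1:ℝ) else 0) + (if x = s+1 then (τ*(1+r (s+1)) - δ) else 0))
    (fun x => if x = s+1 then 1 else 0)
    (by simp)
    (by
      intro x hx
      by_cases hxs : x = s
      · subst hxs
        simp [show x ≠ x + 1 by omega]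
      · by_cases hxs1 : x = s + 1
        · subst hxs1
          simp [show s + 1 + 1 ≠ s + 1 by omega, show s + 1 ≠ s by omega]
        · have h1 : x + 1 ≠ s + 1 := by omega
          simp [h1, hxs, hxs1])
    (by
      intro x _ _
      left
      split_ifs <;> norm_num)
  simp only [← mul_assoc] at key
  rw [sum_spike2 T s (s+1) (by omega) (by omega)] at key
  nlinarith

/-- Euler inequality (borrowing direction), valid when the aggregate constraint is slack. -/
lemma fact2b (hτ : 0 < τ)
    (hu1 : ∀ h : Fin H, ∀ x > (0:ℝ), HasDerivAt (u h) (u' h x) x)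
    (hp : Pareto H T r ω l β τ δ a0 u c a)
    (h : Fin H) (s : ℕ) (hs : s + 1 ≤ T) (hslack : 0 < ∑ h, a h (s+1)) :
    β h ^ s * u' h (c h s) ≤ (τ*(1+r (s+1)) - δ) * (β h ^ (s+1) * u' h (c h (s+1))) := by
  have key := master1 H T r ω l β τ δ a0 u u' c a hτ hu1 hp h
    (fun x => (if x = s then (1:ℝ) else 0) + (if x = s+1 then -(τ*(1+r (s+1)) - δ) else 0))
    (fun x => if x = s+1 then -1 else 0)
    (by simp)
    (by
      intro x hx
      by_cases hxs : x = s
      · subst hxs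
        simp [show x ≠ x + 1 by omega]
      · by_cases hxs1 : x = s + 1
        · subst hxs1
          simp [show s + 1 + 1 ≠ s + 1 by omega, show s + 1 ≠ s by omega]
        · have h1 : x + 1 ≠ s + 1 := by omega
          simp [h1, hxs, hxs1])
    (by
      intro x _ _
      by_cases hxs1 : x = s + 1
      · right; rw [hxs1]; exact hslack
      · left; simp [hxs1])
  simp only [← mul_assoc] at key
  rw [sum_spike2 T s (s+1) (by omega) (by omega)] at key
  nlinarith

/-- Choosing a transfer rate strictly between two marginal rates of substitution. -/
lemma pi_between (A B P1 P2 : ℝ) (hP1 : 0 < P1) (hP2 : 0 < P2) (hlt : B * P1 < A * P2) :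
    0 < -B + ((A / P1 + B / P2) / 2) * P2 ∧ -A + ((A / P1 + B / P2) / 2) * P1 < 0 := by
  constructor
  · have e1 : -B + ((A / P1 + B / P2) / 2) * P2 = (A * P2 - B * P1) / (2 * P1) * (P2 / P2) := by
      field_simp
      ring
    rw [e1, div_self (ne_of_gt hP2), mul_one]
    exact div_pos (by linarith) (by linarith)
  · have e2 : -A + ((A / P1 + B / P2) / 2) * P1 = -((A * P2 - B * P1) / (2 * P2) * (P1 / P1)) := by
      field_simp
      ring
    rw [e2, div_self (ne_of_gt hP1), mul_one, neg_lt, neg_zero]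
    exact div_pos (by linarith) (by linarith)

/-- Marginal rates of substitution are equalized across households. -/
lemma fact3 (hβ : ∀ h, 0 < β h)
    (hu1 : ∀ h : Fin H, ∀ x > (0:ℝ), HasDerivAt (u h) (u' h x) x)
    (hu'pos : ∀ h : Fin H, ∀ x > (0:ℝ), 0 < u' h x)
    (hp : Pareto H T r ω l β τ δ a0 u c a)
    (h1 h2 : Fin H) (t : ℕ) (ht1 : 1 ≤ t) (ht2 : t ≤ T) :
    (β h1 ^ 0 * u' h1 (c h1 0)) * (β h2 ^ t * u' h2 (c h2 t)) ≤
      (β h2 ^ 0 * u' h2 (c h2 0)) * (β h1 ^ t * u' h1 (c h1 t)) := by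
  by_cases hne : h1 = h2
  · subst hne; exact le_rfl
  by_contra hlt
  push_neg at hlt
  have hcp : ∀ h : Fin H, ∀ x ≤ T, 0 < c h x := fun h x hx => hp.1.2.1 h x hx
  have hApos : 0 < β h1 ^ 0 * u' h1 (c h1 0) :=
    mul_pos (pow_pos (hβ h1) 0) (hu'pos h1 _ (hcp h1 0 (by omega)))
  have hBpos : 0 < β h2 ^ 0 * u' h2 (c h2 0) :=
    mul_pos (pow_pos (hβ h2) 0) (hu'pos h2 _ (hcp h2 0 (by omega)))
  have hP1pos : 0 < β h1 ^ t * u' h1 (c h1 t) :=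
    mul_pos (pow_pos (hβ h1) t) (hu'pos h1 _ (hcp h1 t ht2))
  have hP2pos : 0 < β h2 ^ t * u' h2 (c h2 t) :=
    mul_pos (pow_pos (hβ h2) t) (hu'pos h2 _ (hcp h2 t ht2))
  obtain ⟨key1, key2⟩ := pi_between _ _ _ _ hP1pos hP2pos hlt
  set π := ((β h1 ^ 0 * u' h1 (c h1 0)) / (β h1 ^ t * u' h1 (c h1 t)) +
      (β h2 ^ 0 * u' h2 (c h2 0)) / (β h2 ^ t * u' h2 (c h2 t))) / 2 with hπ
  set v : ℕ → ℝ := fun x => (if x = 0 then (-1:ℝ) else 0) + (if x = t then π else 0) with hv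
  refine master2 H T r ω l β τ δ a0 u u' c a hu1 hp h2 h1 (Ne.symm hne) v
    (fun x => Nat.rec (0:ℝ) (fun n En => (τ*(1+r n) - δ) * En - v n) x) rfl (fun _ _ => rfl)
    ?_ ?_
  · rw [hv]
    simp only [← mul_assoc]
    rw [sum_spike2 T 0 t (by omega) (by omega)]
    simp only [mul_neg, mul_one]
    calc (0:ℝ) < -(β h2 ^ 0 * u' h2 (c h2 0)) + π * (β h2 ^ t * u' h2 (c h2 t)) := key1
    _ = -(β h2 ^ 0 * u' h2 (c h2 0)) + β h2 ^ t * u' h2 (c h2 t) * π := by ring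
  · rw [hv]
    simp only [← mul_assoc]
    rw [sum_spike2 T 0 t (by omega) (by omega)]
    simp only [mul_neg, mul_one]
    calc -(β h1 ^ 0 * u' h1 (c h1 0)) + β h1 ^ t * u' h1 (c h1 t) * π
        = -(β h1 ^ 0 * u' h1 (c h1 0)) + π * (β h1 ^ t * u' h1 (c h1 t)) := by ring
    _ < 0 := key2

end facts

/-- Theorem 5 / thm-prop: at every Pareto optimal solution there
exist multipliers `θ > 0` and `ν ≥ 0` such that, with `λ` defined backwards by
`λ_T = ν_{T+1}`, `λ_{t−1} = λ_t(τ(1+r_t) − δ) + ν_t`, the optimal consumption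
satisfies `(u^h)'(c̄_t^h) = τ λ_t / ((β^h)^t θ_h)`, the capital stocks satisfy the
forward recursion, complementary slackness holds and `Σ_h ā_{T+1}^h = 0`. -/
theorem pareto_implies_multiplier_system (H T : ℕ) (hH : 1 ≤ H)
    (r ω : ℕ → ℝ) (l β : Fin H → ℝ) (τ δ : ℝ) (a0 : Fin H → ℝ)
    (hr : ∀ t ≤ T, 0 < r t) (hω : ∀ t ≤ T, 1 ≤ ω t)
    (hl : ∀ h, 0 < l h) (hβ : ∀ h, 0 < β h ∧ β h < 1)
    (hτ : 1 ≤ τ) (hδ0 : 0 < δ) (hδ1 : δ < 1)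
    (ha0 : 0 < ∑ h, a0 h)
    (u u' u'' : Fin H → ℝ → ℝ)
    (hu1 : ∀ h : Fin H, ∀ x > (0:ℝ), HasDerivAt (u h) (u' h x) x)
    (hu2 : ∀ h : Fin H, ∀ x > (0:ℝ), HasDerivAt (u' h) (u'' h x) x)
    (hu2c : ∀ h : Fin H, ContinuousOn (u'' h) (Set.Ioi 0))
    (hu'pos : ∀ h : Fin H, ∀ x > (0:ℝ), 0 < u' h x)
    (hu''neg : ∀ h : Fin H, ∀ x > (0:ℝ), u'' h x < 0)
    (hu'top : ∀ h : Fin H, Filter.Tendsto (u' h) Filter.atTop (nhds 0))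
    (hu'zero : ∀ h : Fin H,
      Filter.Tendsto (u' h) (nhdsWithin 0 (Set.Ioi 0)) Filter.atTop)
    (c a : Fin H → ℕ → ℝ) (hpareto : Pareto H T r ω l β τ δ a0 u c a) :
    ∃ (θ : Fin H → ℝ) (ν : ℕ → ℝ) (lam : ℕ → ℝ),
      (∀ h : Fin H, 0 < θ h) ∧
      (∀ t, 1 ≤ t → t ≤ T + 1 → 0 ≤ ν t) ∧
      -- final condition for the backward recursion
      lam T = ν (T + 1) ∧
      -- backward recursion `λ_{t−1} = λ_t(τ(1+r_t) − δ) + ν_t`, `t = T,…,1`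
      (∀ t, 1 ≤ t → t ≤ T → lam (t - 1) = lam t * (τ * (1 + r t) - δ) + ν t) ∧
      -- optimal consumption from (I)
      (∀ h : Fin H, ∀ t ≤ T, u' h (c h t) = τ * lam t / (β h ^ t * θ h)) ∧
      -- forward recursion for the capital stock
      (∀ h : Fin H, ∀ t ≤ T,
        a h (t + 1) = τ * ω t * l h + (τ * (1 + r t) - δ) * a h t - τ * c h t) ∧
      -- complementary slackness
      (∀ t, 1 ≤ t → t ≤ T → ν t * ∑ h, a h t = 0) ∧
      ∑ h, a h (T + 1) = 0 := by
  have hτpos : (0:ℝ) < τ := lt_of_lt_of_le one_pos hτ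
  have hβpos : ∀ h, 0 < β h := fun h => (hβ h).1
  have hcp : ∀ h : Fin H, ∀ x ≤ T, 0 < c h x := hpareto.1.2.1
  set h0 : Fin H := ⟨0, hH⟩ with hh0
  have hρpos : ∀ h : Fin H, ∀ t ≤ T, 0 < β h ^ t * u' h (c h t) := fun h t ht =>
    mul_pos (pow_pos (hβpos h) t) (hu'pos h _ (hcp h t ht))
  refine ⟨fun h => τ / (β h ^ 0 * u' h (c h 0)),
    fun t => if t = T + 1
      then (β h0 ^ T * u' h0 (c h0 T)) / (β h0 ^ 0 * u' h0 (c h0 0))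
      else (β h0 ^ (t-1) * u' h0 (c h0 (t-1))) / (β h0 ^ 0 * u' h0 (c h0 0))
        - ((β h0 ^ t * u' h0 (c h0 t)) / (β h0 ^ 0 * u' h0 (c h0 0))) * (τ * (1 + r t) - δ),
    fun t => (β h0 ^ t * u' h0 (c h0 t)) / (β h0 ^ 0 * u' h0 (c h0 0)),
    ?_, ?_, ?_, ?_, ?_, ?_, ?_, ?_⟩
  · intro h
    exact div_pos hτpos (hρpos h 0 (by omega))
  · -- ν nonneg
    intro t ht1 ht2
    dsimp only
    by_cases htT : t = T + 1
    · rw [if_pos htT]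
      exact le_of_lt (div_pos (hρpos h0 T le_rfl) (hρpos h0 0 (by omega)))
    · rw [if_neg htT]
      have htT' : t ≤ T := by omega
      cases t with
      | zero => omega
      | succ s =>
        have h2a := fact2a H T r ω l β τ δ a0 u u' c a hτpos hu1 hpareto h0 s (by omega)
        have : (β h0 ^ (s+1-1) * u' h0 (c h0 (s+1-1))) / (β h0 ^ 0 * u' h0 (c h0 0))
            - ((β h0 ^ (s+1) * u' h0 (c h0 (s+1))) / (β h0 ^ 0 * u' h0 (c h0 0))) * (τ * (1 + r (s+1)) - δ)
            = ((β h0 ^ s * u' h0 (c h0 s))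
              - (τ * (1 + r (s+1)) - δ) * (β h0 ^ (s+1) * u' h0 (c h0 (s+1))))
              / (β h0 ^ 0 * u' h0 (c h0 0)) := by
          simp only [Nat.add_sub_cancel]
          ring
        rw [this]
        exact div_nonneg (by linarith) (le_of_lt (hρpos h0 0 (by omega)))
  · simp
  · -- backward recursion
    intro t ht1 ht2
    dsimp only
    rw [if_neg (by omega : ¬ t = T + 1)]
    ring
  · -- consumption FOC
    intro h t ht
    dsimp only
    have hcross : (β h ^ 0 * u' h (c h 0)) * (β h0 ^ t * u' h0 (c h0 t))
        = (β h0 ^ 0 * u' h0 (c h0 0)) * (β h ^ t * u' h (c h t)) := by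
      by_cases ht0 : t = 0
      · subst ht0; ring
      · exact le_antisymm
          (fact3 H T r ω l β τ δ a0 u u' c a hβpos hu1 hu'pos hpareto h h0 t (by omega) ht)
          (fact3 H T r ω l β τ δ a0 u u' c a hβpos hu1 hu'pos hpareto h0 h t (by omega) ht)
    have hb : (β h : ℝ) ^ t ≠ 0 := ne_of_gt (pow_pos (hβpos h) t)
    have hρ0 : (β h ^ 0 * u' h (c h 0)) ≠ 0 := ne_of_gt (hρpos h 0 (by omega))
    have hρ00 : (β h0 ^ 0 * u' h0 (c h0 0)) ≠ 0 := ne_of_gt (hρpos h0 0 (by omega))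
    have hτ0 : (τ:ℝ) ≠ 0 := ne_of_gt hτpos
    have hu'h : (0:ℝ) < u' h (c h 0) := hu'pos h _ (hcp h 0 (by omega))
    have hu'h0 : (0:ℝ) < u' h0 (c h0 0) := hu'pos h0 _ (hcp h0 0 (by omega))
    simp only [pow_zero, one_mul] at hcross ⊢
    have hden : (0:ℝ) < β h ^ t * (τ / u' h (c h 0)) :=
      mul_pos (pow_pos (hβpos h) t) (div_pos hτpos hu'h)
    rw [eq_div_iff (ne_of_gt hden)]
    field_simp
    linear_combination (-1) * hcross
  · exact hpareto.1.2.2.1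
  · -- complementary slackness
    intro t ht1 ht2
    dsimp only
    cases t with
    | zero => omega
    | succ s =>
      have hge : 0 ≤ ∑ h, a h (s+1) := hpareto.1.2.2.2 s (by omega)
      rcases eq_or_lt_of_le hge with heq | hlt
      · rw [← heq, mul_zero]
      · have h2a := fact2a H T r ω l β τ δ a0 u u' c a hτpos hu1 hpareto h0 s (by omega)
        have h2b := fact2b H T r ω l β τ δ a0 u u' c a hτpos hu1 hpareto h0 s (by omega) hlt
        have hν0 : (if s + 1 = T + 1
            then (β h0 ^ T * u' h0 (c h0 T)) / (β h0 ^ 0 * u' h0 (c h0 0))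
            else (β h0 ^ (s+1-1) * u' h0 (c h0 (s+1-1))) / (β h0 ^ 0 * u' h0 (c h0 0))
              - ((β h0 ^ (s+1) * u' h0 (c h0 (s+1))) / (β h0 ^ 0 * u' h0 (c h0 0)))
                * (τ * (1 + r (s+1)) - δ)) = 0 := by
          rw [if_neg (by omega : ¬ s + 1 = T + 1)]
          simp only [Nat.add_sub_cancel]
          have : β h0 ^ s * u' h0 (c h0 s)
              = (τ * (1 + r (s+1)) - δ) * (β h0 ^ (s+1) * u' h0 (c h0 (s+1))) :=
            le_antisymm h2b h2a
          have e : ∀ (A B d R : ℝ), A/d - (B/d)*R = (A - R*B)/d := fun A B d R => by ring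
          rw [e, this, sub_self, zero_div]
        rw [hν0, zero_mul]
  · exact factA H T r ω l β τ δ a0 u u' c a hτpos hH hβpos hu1 hu'pos hpareto
end

section
/- Fix weights θ_h > 0 for h = 1,…,H and let ν = (ν_1,…,ν_{T+1}) satisfy ν_t ≥ 0 for all t and ν_{T+1} > 0. Define λ_T := ν_{T+1} and backwards λ_{t−1} := λ_t(τ(1+r_t) − δ) + ν_t for t = T,…,1 (so that λ_t > 0 for all t); let c_t^h > 0 be the unique solution of (u^h)'(c_t^h) = τ λ_t / ((β^h)^t θ_h) (which exists by the Inada conditions), and define a_t^h by the forward recursion a_{t+1}^h = τ ω_t l^h + (τ(1+r_t) − δ) a_t^h − τ c_t^h from the given a_0^h. If ν_t Σ_{h=1}^H a_t^h = 0 for t = 1,…,T, Σ_{h=1}^H a_{T+1}^h = 0, and Σ_{h=1}^H a_t^h ≥ 0 for t = 1,…,T, then the resulting point ((c_t^h),(a_t^h)) is a Pareto optimal solution of the generalized Ramsey model with default. -/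
open Finset in
private lemma sum_range_telescope (lam ν R b : ℕ → ℝ) :
    ∀ n : ℕ, b 0 = 0 →
    (∀ t < n, lam t = lam (t+1) * R (t+1) + ν (t+1)) →
    ∑ t ∈ range (n+1), lam t * (R t * b t - b (t+1))
      = -(lam n * b (n+1)) - ∑ t ∈ range n, ν (t+1) * b (t+1)
  | 0, hb0, _ => by simp [hb0]
  | n+1, hb0, hrec => by
      rw [sum_range_succ, sum_range_telescope lam ν R b n hb0
        (fun t ht => hrec t (by omega)), sum_range_succ, hrec n (by omega)]
      ring

private lemma tangent_line {u u' u'' : ℝ → ℝ}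
    (hu1 : ∀ x > (0:ℝ), HasDerivAt u (u' x) x)
    (hu2 : ∀ x > (0:ℝ), HasDerivAt u' (u'' x) x)
    (hneg : ∀ x > (0:ℝ), u'' x < 0)
    {x y : ℝ} (hx : 0 < x) (hy : 0 < y) :
    u y - u x ≤ u' x * (y - x) := by
  have hanti : StrictAntiOn u' (Set.Ioi 0) :=
    strictAntiOn_of_deriv_neg (convex_Ioi 0)
      (fun z hz => (hu2 z hz).continuousAt.continuousWithinAt)
      (fun z hz => by
        rw [interior_Ioi] at hz
        rw [(hu2 z hz).deriv]; exact hneg z hz)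
  rcases lt_trichotomy x y with hxy | hxy | hxy
  · obtain ⟨k, hk, hk'⟩ := exists_hasDerivAt_eq_slope u u' hxy
      (fun z hz => ((hu1 z (lt_of_lt_of_le hx hz.1)).continuousAt.continuousWithinAt))
      (fun z hz => hu1 z (lt_trans hx hz.1))
    have hk0 : (0:ℝ) < k := lt_trans hx hk.1
    have hlt : u' k < u' x := hanti hx hk0 hk.1
    have hne : y - x ≠ 0 := by linarith
    have heq : u y - u x = u' k * (y - x) := by
      field_simp at hk'; linarith [hk']
    rw [heq]
    exact mul_le_mul_of_nonneg_right hlt.le (by linarith)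
  · subst hxy; simp
  · obtain ⟨k, hk, hk'⟩ := exists_hasDerivAt_eq_slope u u' hxy
      (fun z hz => ((hu1 z (lt_of_lt_of_le hy hz.1)).continuousAt.continuousWithinAt))
      (fun z hz => hu1 z (lt_trans hy hz.1))
    have hk0 : (0:ℝ) < k := lt_trans hy hk.1
    have hlt : u' x < u' k := hanti hk0 hx hk.2
    have hne : x - y ≠ 0 := by linarith
    have heq : u x - u y = u' k * (x - y) := by
      field_simp at hk'; linarith [hk']
    nlinarith [mul_le_mul_of_nonneg_right hlt.le (by linarith : (0:ℝ) ≤ x - y)]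

/-- converse direction: fixing weights `θ_h > 0` and nonnegative
multipliers `ν` with `ν_{T+1} > 0`, if `λ` is obtained by the backward recursion,
`c` solves `(u^h)'(c_t^h) = τ λ_t / ((β^h)^t θ_h)`, `a` is given by the forward
recursion, and complementary slackness together with the nonnegativity of the
aggregate capital stock hold, then `((c_t^h),(a_t^h))` is Pareto optimal. -/
theorem multiplier_system_implies_pareto (H T : ℕ) (hH : 1 ≤ H)
    (r ω : ℕ → ℝ) (l β : Fin H → ℝ) (τ δ : ℝ) (a0 : Fin H → ℝ)
    (hr : ∀ t ≤ T, 0 < r t) (hω : ∀ t ≤ T, 1 ≤ ω t)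
    (hl : ∀ h, 0 < l h) (hβ : ∀ h, 0 < β h ∧ β h < 1)
    (hτ : 1 ≤ τ) (hδ0 : 0 < δ) (hδ1 : δ < 1)
    (ha0 : 0 < ∑ h, a0 h)
    (u u' u'' : Fin H → ℝ → ℝ)
    (hu1 : ∀ h : Fin H, ∀ x > (0:ℝ), HasDerivAt (u h) (u' h x) x)
    (hu2 : ∀ h : Fin H, ∀ x > (0:ℝ), HasDerivAt (u' h) (u'' h x) x)
    (hu2c : ∀ h : Fin H, ContinuousOn (u'' h) (Set.Ioi 0))
    (hu'pos : ∀ h : Fin H, ∀ x > (0:ℝ), 0 < u' h x)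
    (hu''neg : ∀ h : Fin H, ∀ x > (0:ℝ), u'' h x < 0)
    (hu'top : ∀ h : Fin H, Filter.Tendsto (u' h) Filter.atTop (nhds 0))
    (hu'zero : ∀ h : Fin H,
      Filter.Tendsto (u' h) (nhdsWithin 0 (Set.Ioi 0)) Filter.atTop)
    (θ : Fin H → ℝ) (ν lam : ℕ → ℝ) (c a : Fin H → ℕ → ℝ)
    (hθ : ∀ h : Fin H, 0 < θ h)
    (hν : ∀ t, 1 ≤ t → t ≤ T + 1 → 0 ≤ ν t)
    (hνT : 0 < ν (T + 1))
    -- backward recursion for λ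
    (hlamT : lam T = ν (T + 1))
    (hlam : ∀ t, 1 ≤ t → t ≤ T → lam (t - 1) = lam t * (τ * (1 + r t) - δ) + ν t)
    -- `c_t^h > 0` is the unique solution of `(u^h)'(c_t^h) = τ λ_t / ((β^h)^t θ_h)`
    (hcpos : ∀ h : Fin H, ∀ t ≤ T, 0 < c h t)
    (hc : ∀ h : Fin H, ∀ t ≤ T, u' h (c h t) = τ * lam t / (β h ^ t * θ h))
    -- forward recursion for `a` from the given `a_0^h`
    (ha0' : ∀ h : Fin H, a h 0 = a0 h)
    (ha : ∀ h : Fin H, ∀ t ≤ T,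
      a h (t + 1) = τ * ω t * l h + (τ * (1 + r t) - δ) * a h t - τ * c h t)
    -- complementary slackness and aggregate constraints
    (hcs : ∀ t, 1 ≤ t → t ≤ T → ν t * ∑ h, a h t = 0)
    (hfin : ∑ h, a h (T + 1) = 0)
    (hagg : ∀ t, 1 ≤ t → t ≤ T → 0 ≤ ∑ h, a h t) :
    Pareto H T r ω l β τ δ a0 u c a := by
  constructor
  · refine ⟨ha0', hcpos, ha, fun t ht => ?_⟩
    rcases eq_or_lt_of_le ht with h | h
    · rw [h]; exact le_of_eq hfin.symm
    · exact hagg (t+1) (by omega) (by omega)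
  · rintro ⟨c', a', ⟨ha0'', hcpos', hbud', haggr'⟩, hle, hlt⟩
    set R : ℕ → ℝ := fun t => τ * (1 + r t) - δ with hRdef
    set b : ℕ → ℝ := fun t => ∑ h, (a' h t - a h t) with hbdef
    have hb0 : b 0 = 0 := by
      simp only [hbdef]
      rw [Finset.sum_eq_zero]
      intro h _
      rw [ha0' h, ha0'' h, sub_self]
    -- strict aggregate utility improvement
    have hD : 0 < ∑ h : Fin H, ∑ t ∈ Finset.range (T+1),
        θ h * (β h ^ t * (u h (c' h t) - u h (c h t))) := by
      obtain ⟨h₀, hh₀⟩ := hlt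
      have hsum : ∑ h : Fin H, θ h * Phi T β u c' h < ∑ h : Fin H, θ h * Phi T β u c h :=
        Finset.sum_lt_sum (fun i _ => mul_le_mul_of_nonneg_left (hle i) (hθ i).le)
          ⟨h₀, Finset.mem_univ _, mul_lt_mul_of_pos_left hh₀ (hθ h₀)⟩
      have expand : ∀ hh : Fin H, θ hh * Phi T β u c hh - θ hh * Phi T β u c' hh
          = ∑ t ∈ Finset.range (T+1), θ hh * (β hh ^ t * (u hh (c' hh t) - u hh (c hh t))) := by
        intro hh
        simp only [Phi, mul_neg, Finset.mul_sum]
        have hns : ∀ X Y : ℝ, -X - -Y = Y - X := fun X Y => by ring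
        rw [hns, ← Finset.sum_sub_distrib]
        exact Finset.sum_congr rfl (fun t _ => by ring)
      calc (0:ℝ) < ∑ h : Fin H, (θ h * Phi T β u c h - θ h * Phi T β u c' h) := by
            rw [Finset.sum_sub_distrib]; linarith
        _ = _ := Finset.sum_congr rfl (fun h _ => expand h)
    -- termwise tangent-line bound
    have hstep : ∀ h : Fin H, ∀ t ∈ Finset.range (T+1),
        θ h * (β h ^ t * (u h (c' h t) - u h (c h t))) ≤ τ * lam t * (c' h t - c h t) := by
      intro h t ht
      have htT : t ≤ T := Nat.lt_succ_iff.mp (Finset.mem_range.mp ht)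
      have h1 := tangent_line (hu1 h) (hu2 h) (hu''neg h) (hcpos h t htT) (hcpos' h t htT)
      rw [hc h t htT] at h1
      have hbpos : (0:ℝ) < β h ^ t := pow_pos (hβ h).1 t
      have h2 : β h ^ t * (u h (c' h t) - u h (c h t))
          ≤ β h ^ t * (τ * lam t / (β h ^ t * θ h) * (c' h t - c h t)) :=
        mul_le_mul_of_nonneg_left h1 hbpos.le
      have h3 : θ h * (β h ^ t * (u h (c' h t) - u h (c h t)))
          ≤ θ h * (β h ^ t * (τ * lam t / (β h ^ t * θ h) * (c' h t - c h t))) :=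
        mul_le_mul_of_nonneg_left h2 (hθ h).le
      have key : θ h * (β h ^ t * (τ * lam t / (β h ^ t * θ h) * (c' h t - c h t)))
          = τ * lam t * (c' h t - c h t) := by
        have hne : β h ^ t * θ h ≠ 0 := (mul_pos hbpos (hθ h)).ne'
        have hθne : θ h ≠ 0 := (hθ h).ne'
        field_simp
      linarith [h3, key.le, key.ge]
    -- aggregate budget identity
    have hbudget : ∀ t ≤ T, ∑ h : Fin H, (τ * (c' h t - c h t)) = R t * b t - b (t+1) := by
      intro t htT
      have hper : ∀ h : Fin H, τ * (c' h t - c h t)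
          = R t * (a' h t - a h t) - (a' h (t+1) - a h (t+1)) := by
        intro h
        have e1 := hbud' h t htT
        have e2 := ha h t htT
        simp only [hRdef]
        linarith
      rw [Finset.sum_congr rfl (fun h _ => hper h), Finset.sum_sub_distrib]
      simp only [hbdef, Finset.mul_sum]
    -- chain of inequalities
    have hD2 : ∑ h : Fin H, ∑ t ∈ Finset.range (T+1),
        θ h * (β h ^ t * (u h (c' h t) - u h (c h t)))
        ≤ ∑ t ∈ Finset.range (T+1), lam t * (R t * b t - b (t+1)) := by
      calc ∑ h : Fin H, ∑ t ∈ Finset.range (T+1),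
            θ h * (β h ^ t * (u h (c' h t) - u h (c h t)))
          ≤ ∑ h : Fin H, ∑ t ∈ Finset.range (T+1), τ * lam t * (c' h t - c h t) :=
            Finset.sum_le_sum (fun h _ => Finset.sum_le_sum (hstep h))
        _ = ∑ t ∈ Finset.range (T+1), ∑ h : Fin H, τ * lam t * (c' h t - c h t) :=
            Finset.sum_comm
        _ = ∑ t ∈ Finset.range (T+1), lam t * (R t * b t - b (t+1)) := by
            apply Finset.sum_congr rfl
            intro t ht
            have htT : t ≤ T := Nat.lt_succ_iff.mp (Finset.mem_range.mp ht)
            rw [← hbudget t htT, Finset.mul_sum]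
            apply Finset.sum_congr rfl
            intro h _
            ring
    -- telescope
    have htel := sum_range_telescope lam ν R b T hb0 (fun t ht => by
      have := hlam (t+1) (by omega) (by omega)
      simpa using this)
    -- nonnegativity of the dual terms
    have hterm : ∀ t ∈ Finset.range T, 0 ≤ ν (t+1) * b (t+1) := by
      intro t ht
      have htT : t < T := Finset.mem_range.mp ht
      have h1 : ν (t+1) * (∑ h : Fin H, a h (t+1)) = 0 := hcs (t+1) (by omega) (by omega)
      have h2 : 0 ≤ ∑ h : Fin H, a' h (t+1) := haggr' t (by omega)
      have h3 : 0 ≤ ν (t+1) := hν (t+1) (by omega) (by omega)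
      have hbe : b (t+1) = (∑ h : Fin H, a' h (t+1)) - ∑ h : Fin H, a h (t+1) := by
        simp only [hbdef]; rw [Finset.sum_sub_distrib]
      rw [hbe, mul_sub, h1, sub_zero]
      exact mul_nonneg h3 h2
    have hlast : 0 ≤ lam T * b (T+1) := by
      have h2 : 0 ≤ ∑ h : Fin H, a' h (T+1) := haggr' T le_rfl
      have hbe : b (T+1) = (∑ h : Fin H, a' h (T+1)) - ∑ h : Fin H, a h (T+1) := by
        simp only [hbdef]; rw [Finset.sum_sub_distrib]
      rw [hbe, hfin, sub_zero, hlamT]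
      exact mul_nonneg hνT.le h2
    have hsum_nonneg : 0 ≤ ∑ t ∈ Finset.range T, ν (t+1) * b (t+1) :=
      Finset.sum_nonneg hterm
    linarith [hD, hD2, htel]
end
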